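/- arXiv:math/0506604 — 12 statements merged into one kernel-verified Lean document; each statement's English description precedes it below -/
import Mathlib

section
/- If F, F' : F_2^m → F_2^m are CCZ-equivalent (i.e. there is a linear permutation L of F_2^{2m} mapping the graph {(x,F(x))} onto the graph {(x,F'(x))}), then F and F' have the same Walsh spectrum multiset, i.e. {λ_F(a,b) : a,b} = {λ_{F'}(a,b) : a,b} where λ_F(a,b)=Σ_x (-1)^{b·F(x)+a·x}. -/
/-!
Index the Walsh spectrum by linear functionals `φ` on `𝔽₂^m × 𝔽₂^m` instead of pairs `(a, b)`:
`λ_F(φ) = Σ_x (-1)^{φ(x, F x)}`. If `L` maps the graph of `F` onto that of `F'`, then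
`x ↦ (L (x, F x)).1` is a bijection, and reindexing the sum along it gives
`λ_{F'}(φ) = λ_F(φ ∘ L)`. As `φ ↦ φ ∘ L` permutes the dual, the two spectra agree.
-/

open scoped BigOperators

/-- The Walsh transform value `λ_F(a,b) = Σ_x (-1)^{b·F(x) + a·x}`. -/
noncomputable def walsh (m : ℕ) (F : (Fin m → ZMod 2) → (Fin m → ZMod 2))
    (a b : Fin m → ZMod 2) : ℤ :=
  ∑ x : Fin m → ZMod 2, (-1 : ℤ) ^ (dotProduct b (F x) + dotProduct a x).val

theorem exists_equiv_of_image_graph_eq {α β α' β' : Type*} (L : α × β ≃ α' × β')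
    {F : α → β} {F' : α' → β'} (hL : L '' {p | p.2 = F p.1} = {p | p.2 = F' p.1}) :
    ∃ σ : α ≃ α', ∀ x, L (x, F x) = (σ x, F' (σ x)) := by
  have hgraph (x : α) : L (x, F x) = ((L (x, F x)).1, F' (L (x, F x)).1) := by
    have hmem : L (x, F x) ∈ {p | p.2 = F' p.1} := hL ▸ Set.mem_image_of_mem L rfl
    exact Prod.ext rfl hmem
  refine ⟨Equiv.ofBijective (fun x => (L (x, F x)).1) ⟨fun x y hxy => ?_, fun y => ?_⟩, hgraph⟩
  · have hL_eq : L (x, F x) = L (y, F y) := by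
      rw [hgraph x, hgraph y]
      exact congrArg (fun z => (z, F' z)) hxy
    exact congrArg Prod.fst (L.injective hL_eq)
  · obtain ⟨p, hp, hLp⟩ : (y, F' y) ∈ L '' {p | p.2 = F p.1} := hL ▸ rfl
    refine ⟨p.1, ?_⟩
    change (L (p.1, F p.1)).1 = y
    rw [show (p.1, F p.1) = p from Prod.ext rfl hp.symm, hLp]

noncomputable def prodDotProductEquiv (R n n' : Type*) [CommSemiring R] [Fintype n]
    [DecidableEq n] [Fintype n'] [DecidableEq n'] :
    ((n → R) × (n' → R)) ≃ₗ[R] Module.Dual R ((n → R) × (n' → R)) :=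
  ((dotProductEquiv R n).prodCongr (dotProductEquiv R n')).trans
    (Module.dualProdDualEquivDual R _ _)

theorem prodDotProductEquiv_apply {R n n' : Type*} [CommSemiring R] [Fintype n] [DecidableEq n]
    [Fintype n'] [DecidableEq n'] (c p : (n → R) × (n' → R)) :
    prodDotProductEquiv R n n' c p = c.1 ⬝ᵥ p.1 + c.2 ⬝ᵥ p.2 := rfl

section GraphWalsh

variable {V W V' W' : Type*} [AddCommMonoid V] [Module (ZMod 2) V] [AddCommMonoid W]
  [Module (ZMod 2) W] [AddCommMonoid V'] [Module (ZMod 2) V'] [AddCommMonoid W']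
  [Module (ZMod 2) W']

noncomputable def graphWalsh [Fintype V] (F : V → W) (φ : Module.Dual (ZMod 2) (V × W)) : ℤ :=
  ∑ x, (-1 : ℤ) ^ (φ (x, F x)).val

theorem graphWalsh_dualMap [Fintype V] [Fintype V'] {F : V → W} {F' : V' → W'}
    (L : (V × W) ≃ₗ[ZMod 2] (V' × W')) (hL : L '' {p | p.2 = F p.1} = {p | p.2 = F' p.1})
    (φ : Module.Dual (ZMod 2) (V' × W')) :
    graphWalsh F (L.dualMap φ) = graphWalsh F' φ := by
  obtain ⟨σ, hσ⟩ := exists_equiv_of_image_graph_eq L.toEquiv hL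
  refine Fintype.sum_equiv σ _ _ fun x => ?_
  simp only [LinearEquiv.dualMap_apply]
  exact congrArg (fun p => (-1 : ℤ) ^ (φ p).val) (hσ x)

end GraphWalsh

theorem walsh_eq_graphWalsh (m : ℕ) (F : (Fin m → ZMod 2) → (Fin m → ZMod 2))
    (c : (Fin m → ZMod 2) × (Fin m → ZMod 2)) :
    walsh m F c.1 c.2 = graphWalsh F (prodDotProductEquiv (ZMod 2) (Fin m) (Fin m) c) := by
  simp only [walsh, graphWalsh, prodDotProductEquiv_apply, add_comm]

/-- If `F` and `F'` are CCZ-equivalent, i.e. some linear permutation of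
`𝔽₂^{2m}` maps the graph of `F` onto the graph of `F'`, then they have the
same Walsh spectrum multiset. -/
theorem stmt_1 (m : ℕ) (F F' : (Fin m → ZMod 2) → (Fin m → ZMod 2))
    (L : ((Fin m → ZMod 2) × (Fin m → ZMod 2)) ≃ₗ[ZMod 2]
         ((Fin m → ZMod 2) × (Fin m → ZMod 2)))
    (hL : L '' {p | p.2 = F p.1} = {p | p.2 = F' p.1}) :
    Multiset.map (fun p => walsh m F p.1 p.2)
        (Finset.univ : Finset ((Fin m → ZMod 2) × (Fin m → ZMod 2))).val =
    Multiset.map (fun p => walsh m F' p.1 p.2)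
        (Finset.univ : Finset ((Fin m → ZMod 2) × (Fin m → ZMod 2))).val := by
  -- `E` is the adjoint of `L` with respect to the dot product on `𝔽₂^{2m}`.
  let E := (prodDotProductEquiv (ZMod 2) (Fin m) (Fin m)).trans
    (L.dualMap.trans (prodDotProductEquiv (ZMod 2) (Fin m) (Fin m)).symm)
  have hE (c) : walsh m F (E c).1 (E c).2 = walsh m F' c.1 c.2 := by
    simp only [walsh_eq_graphWalsh, E, LinearEquiv.trans_apply, LinearEquiv.apply_symm_apply,
      graphWalsh_dualMap L hL]
  conv_lhs => rw [← Multiset.map_univ_val_equiv E.toEquiv, Multiset.map_map]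
  exact congrArg (Multiset.map · _) (funext hE)
end

section
/- Let F : F_2^m → F_2^m, let V' be a subgroup of F_2^{2m}, and define A_F = {(a, F(x+a)+F(x)) : a ≠ 0, x ∈ F_2^m}. Then A_F ∩ V' = ∅ if and only if the graph G_F is transversal to V', provided V' has order 2^m. More precisely: if |V'| = 2^m, then A_F ∩ V' = ∅ iff |G_F ∩ (u+V')| = 1 for all u. -/
/-- Let `V'` be a subgroup of `𝔽₂^{2m}` of order `2^m` and
`A_F = {(a, F(x+a)+F(x)) : a ≠ 0, x}`.  Then `A_F ∩ V' = ∅` iff the graph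
`G_F` is transversal to `V'` (every coset `u + V'` meets `G_F` exactly once). -/
theorem stmt_5 (m : ℕ) (F : (Fin m → ZMod 2) → (Fin m → ZMod 2))
    (V' : Submodule (ZMod 2) ((Fin m → ZMod 2) × (Fin m → ZMod 2)))
    (hcard : Nat.card V' = 2 ^ m) :
    ({p : (Fin m → ZMod 2) × (Fin m → ZMod 2) |
        ∃ a x : Fin m → ZMod 2, a ≠ 0 ∧ p = (a, F (x + a) + F x)} ∩
      (V' : Set ((Fin m → ZMod 2) × (Fin m → ZMod 2))) = ∅) ↔
    (∀ u : (Fin m → ZMod 2) × (Fin m → ZMod 2),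
      ∃! g : (Fin m → ZMod 2) × (Fin m → ZMod 2),
        g ∈ {p : (Fin m → ZMod 2) × (Fin m → ZMod 2) | p.2 = F p.1} ∧
        ∃ w ∈ (V' : Set ((Fin m → ZMod 2) × (Fin m → ZMod 2))), g = u + w) := by
  set β := (Fin m → ZMod 2) × (Fin m → ZMod 2) with hβ
  have hself : ∀ x : β, x + x = 0 := by
    intro x
    rw [← two_smul (ZMod 2) x]
    have : (2 : ZMod 2) = 0 := by decide
    rw [this, zero_smul]
  have hneg : ∀ x : β, -x = x := fun x => neg_eq_of_add_eq_zero_left (hself x)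
  have hselfα : ∀ x : Fin m → ZMod 2, x + x = 0 := by
    intro x
    rw [← two_smul (ZMod 2) x]
    have : (2 : ZMod 2) = 0 := by decide
    rw [this, zero_smul]
  -- rewrite the coset condition
  have hcoset : ∀ g u : β, (∃ w ∈ (V' : Set β), g = u + w) ↔ g + u ∈ V' := by
    intro g u
    constructor
    · rintro ⟨w, hw, rfl⟩
      have : u + w + u = w := by
        rw [add_comm u w, add_assoc, hself u, add_zero]
      rwa [this]
    · intro h
      exact ⟨g + u, h, by rw [add_comm g u, ← add_assoc, hself u, zero_add]⟩
  constructor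
  · intro hempty u
    -- injectivity of x ↦ mk (x, F x)
    have hinj : Function.Injective
        (fun x : Fin m → ZMod 2 => Submodule.Quotient.mk (p := V') (x, F x)) := by
      intro x y hxy
      simp only [Submodule.Quotient.eq] at hxy
      by_contra hne
      have hmem : ((x + y, F x + F y) : β) ∈ V' := by
        have : ((x, F x) : β) - (y, F y) = (x + y, F x + F y) := by
          rw [sub_eq_add_neg, hneg]
          rfl
        rwa [this] at hxy
      have : ((x + y, F x + F y) : β) ∈ ({p : β |
          ∃ a z : Fin m → ZMod 2, a ≠ 0 ∧ p = (a, F (z + a) + F z)} ∩ (V' : Set β)) := by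
        refine ⟨⟨x + y, y, ?_, ?_⟩, hmem⟩
        · intro h0
          apply hne
          have hn : -y = y := neg_eq_of_add_eq_zero_left (hselfα y)
          rw [add_eq_zero_iff_eq_neg.mp h0, hn]
        · have : y + (x + y) = x := by
            rw [add_comm x y, ← add_assoc, hselfα y, zero_add]
          rw [this]
      rw [hempty] at this
      exact this
    have hbij : Function.Bijective
        (fun x : Fin m → ZMod 2 => Submodule.Quotient.mk (p := V') (x, F x)) := by
      rw [Nat.bijective_iff_injective_and_card]
      refine ⟨hinj, ?_⟩
      have h1 : Nat.card (Fin m → ZMod 2) = 2 ^ m := by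
        simp [Nat.card_eq_fintype_card]
      have h2 : Nat.card β = 2 ^ m * 2 ^ m := by
        simp [hβ, Nat.card_eq_fintype_card, Fintype.card_prod]
      have h3 : Nat.card β = Nat.card (β ⧸ V') * Nat.card V' :=
        AddSubgroup.card_eq_card_quotient_mul_card_addSubgroup V'.toAddSubgroup
      rw [h2, hcard] at h3
      have : Nat.card (β ⧸ V') = 2 ^ m :=
        (Nat.eq_of_mul_eq_mul_right (by positivity) h3.symm)
      rw [h1, this]
    obtain ⟨x, hx0⟩ := hbij.2 (Submodule.Quotient.mk u)
    have hx : Submodule.Quotient.mk (p := V') (x, F x) = Submodule.Quotient.mk u := hx0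
    refine ⟨(x, F x), ⟨rfl, (hcoset _ _).mpr ?_⟩, ?_⟩
    · have : ((x, F x) : β) - u ∈ V' := (Submodule.Quotient.eq V').mp hx
      rwa [sub_eq_add_neg, hneg] at this
    · rintro g ⟨hg, hw⟩
      have hgu : g + u ∈ V' := (hcoset g u).mp hw
      have : Submodule.Quotient.mk (p := V') g = Submodule.Quotient.mk u := by
        rw [Submodule.Quotient.eq, sub_eq_add_neg, hneg]
        exact hgu
      have hgeq : (g.1, F g.1) = g := by
        obtain ⟨g1, g2⟩ := g
        simp only [Set.mem_setOf_eq] at hg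
        simp [hg]
      have he : g.1 = x := hinj (a₁ := g.1) (a₂ := x) (by
        show Submodule.Quotient.mk (g.1, F g.1) = Submodule.Quotient.mk (x, F x)
        rw [hgeq]
        exact this.trans hx.symm)
      rw [← hgeq, he]
  · intro htrans
    ext p
    simp only [Set.mem_inter_iff, Set.mem_setOf_eq, Set.mem_empty_iff_false, iff_false,
      not_and]
    rintro ⟨a, x, ha, rfl⟩ hmem
    obtain ⟨g, _, huniq⟩ := htrans (x, F x)
    have h1 : g = (x, F x) :=
      (huniq (x, F x) ⟨rfl, (hcoset _ _).mpr (by rw [hself]; exact V'.zero_mem)⟩).symm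
    have h2 : (x + a, F (x + a)) = g := by
      apply huniq
      refine ⟨rfl, (hcoset _ _).mpr ?_⟩
      have : ((x + a, F (x + a)) : β) + (x, F x) = (a, F (x + a) + F x) := by
        apply Prod.ext
        · simp only [Prod.fst_add]
          rw [add_comm x a, add_assoc, hselfα x, add_zero]
        · rfl
      rwa [this]
    have hxa : x + a = x := congrArg Prod.fst (h2.trans h1)
    exact ha (by rwa [add_eq_left] at hxa)
end

section
/- Let F, F' : F_2^m → F_2^m and suppose L = (L_1,L_2) is a linear permutation of F_2^{2m} with L(G_F) = G_{F'} and L_1(x,y) = L(x) depends only on the first variable. Then F' is EA-equivalent to F, i.e. F' = A_1 ∘ F ∘ A_2 + A for some affine permutations A_1, A_2 and affine A. -/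
/-!
Since `L₁(x, y)` ignores `y`, `L` is block lower-triangular: `L (x, y) = (a x, c x + d y)`.
Surjectivity of `L` makes `a` surjective and injectivity of `L` makes `d` injective, so in finite
dimension both are linear automorphisms. A point `(x, F' x)` of the graph of `F'` is the image of
some `(u, F u)`, whence `x = a u` and `F' x = d (F (a⁻¹ x)) + c (a⁻¹ x)`.
-/

open Function LinearMap

section Semiring

variable {K V W V' W' : Type*} [Semiring K] [AddCommMonoid V] [Module K V] [AddCommMonoid W]
  [Module K W] [AddCommMonoid V'] [Module K V'] [AddCommMonoid W'] [Module K W']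

namespace LinearMap

def blockFstFst (L : V × W →ₗ[K] V' × W') : V →ₗ[K] V' := fst K V' W' ∘ₗ L ∘ₗ inl K V W

def blockSndFst (L : V × W →ₗ[K] V' × W') : V →ₗ[K] W' := snd K V' W' ∘ₗ L ∘ₗ inl K V W

def blockSndSnd (L : V × W →ₗ[K] V' × W') : W →ₗ[K] W' := snd K V' W' ∘ₗ L ∘ₗ inr K V W

theorem snd_apply_eq_blockSndFst_add_blockSndSnd (L : V × W →ₗ[K] V' × W') (x : V) (y : W) :
    (L (x, y)).2 = L.blockSndFst x + L.blockSndSnd y := by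
  rw [← Prod.fst_add_snd (x, y), map_add]
  rfl

theorem fst_apply_eq_blockFstFst {L : V × W →ₗ[K] V' × W'}
    (hdep : ∀ x y y', (L (x, y)).1 = (L (x, y')).1) (x : V) (y : W) :
    (L (x, y)).1 = L.blockFstFst x :=
  hdep x y 0

theorem exists_of_graph_subset_image_graph {L : V × W →ₗ[K] V' × W'} {F : V → W} {F' : V' → W'}
    (hdep : ∀ x y y', (L (x, y)).1 = (L (x, y')).1)
    (hL : {p | p.2 = F' p.1} ⊆ L '' {p | p.2 = F p.1}) (x : V') :
    ∃ u, L.blockFstFst u = x ∧ F' x = L.blockSndFst u + L.blockSndSnd (F u) := by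
  obtain ⟨⟨u, v⟩, hv, hLuv⟩ := hL (show (x, F' x) ∈ {p | p.2 = F' p.1} from rfl)
  refine ⟨u, ?_, ?_⟩
  · rw [← fst_apply_eq_blockFstFst hdep u v, hLuv]
  · rw [← hv, ← snd_apply_eq_blockSndFst_add_blockSndSnd, hLuv]

end LinearMap

theorem LinearEquiv.surjective_blockFstFst (L : (V × W) ≃ₗ[K] (V' × W'))
    (hdep : ∀ x y y', (L (x, y)).1 = (L (x, y')).1) :
    Surjective L.toLinearMap.blockFstFst := by
  intro x
  refine ⟨(L.symm (x, 0)).1, ?_⟩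
  rw [← fst_apply_eq_blockFstFst hdep _ (L.symm (x, 0)).2]
  simp

end Semiring

theorem LinearEquiv.injective_blockSndSnd {K V W V' W' : Type*} [Ring K] [AddCommGroup V]
    [Module K V] [AddCommGroup W] [Module K W] [AddCommGroup V'] [Module K V'] [AddCommGroup W']
    [Module K W'] (L : (V × W) ≃ₗ[K] (V' × W')) (hdep : ∀ x y y', (L (x, y)).1 = (L (x, y')).1) :
    Injective L.toLinearMap.blockSndSnd := by
  rw [← ker_eq_bot, ker_eq_bot']
  intro y hy
  have hfst : (L (0, y)).1 = 0 := by
    have h := hdep 0 y 0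
    rwa [Prod.mk_zero_zero, map_zero] at h
  have hLy : L (0, y) = L 0 := by rw [map_zero]; exact Prod.ext hfst hy
  simpa using L.injective hLy

/-- If a linear permutation `L` of `𝔽₂^{2m}` maps the graph of `F` to the graph
of `F'` and its first component `L₁(x,y)` depends only on `x`, then `F'` is
EA-equivalent to `F`: `F' = A₁ ∘ F ∘ A₂ + A` with `A₁, A₂` affine permutations
and `A` affine. -/
theorem stmt_6 (m : ℕ) (F F' : (Fin m → ZMod 2) → (Fin m → ZMod 2))
    (L : ((Fin m → ZMod 2) × (Fin m → ZMod 2)) ≃ₗ[ZMod 2]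
         ((Fin m → ZMod 2) × (Fin m → ZMod 2)))
    (hL : L '' {p | p.2 = F p.1} = {p | p.2 = F' p.1})
    (hdep : ∀ x y y' : Fin m → ZMod 2, (L (x, y)).1 = (L (x, y')).1) :
    ∃ (A₁ A₂ : (Fin m → ZMod 2) ≃ₗ[ZMod 2] (Fin m → ZMod 2))
      (A : (Fin m → ZMod 2) →ₗ[ZMod 2] (Fin m → ZMod 2))
      (c₁ c₂ c : Fin m → ZMod 2),
      ∀ x, F' x = A₁ (F (A₂ x + c₂)) + c₁ + A x + c := by
  set M := L.toLinearMap
  have ha : Injective M.blockFstFst :=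
    injective_iff_surjective.mpr (L.surjective_blockFstFst hdep)
  let a := LinearEquiv.ofInjectiveEndo M.blockFstFst ha
  let d := LinearEquiv.ofInjectiveEndo M.blockSndSnd (L.injective_blockSndSnd hdep)
  refine ⟨d, a.symm, M.blockSndFst ∘ₗ a.symm, 0, 0, 0, fun x => ?_⟩
  obtain ⟨u, rfl, hF'⟩ := M.exists_of_graph_subset_image_graph hdep hL.ge x
  have hu : a.symm (M.blockFstFst u) = u := a.symm_apply_apply u
  simp only [add_zero, LinearMap.comp_apply, LinearEquiv.coe_coe, hu, hF']
  exact add_comm _ _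
end

section
/- Let F : F_2^m → F_2^m be a permutation and suppose L = (L_1,L_2) is a linear permutation of F_2^{2m} with L(G_F) = G_{F'} and L_1(x,y) = L(y) depends only on the second variable. Then F' is EA-equivalent to F^{-1}: there exist linear permutations R_1, R_2 and a linear function R with F' = R_1 ∘ F^{-1} ∘ R_2 + R. Moreover F and L must be permutations. -/
/-! Since `L₁ = L ∘ snd`, the point `𝓛 (a, F a)` of the graph of `F'` has first coordinate
`L (F a)`, so `F' (L (F a)) = M₁ a + M₂ (F a)` where `M₁, M₂` are the two halves of `L₂`.
Substituting `a = F⁻¹ (L⁻¹ x)` gives `F' = M₁ ∘ F⁻¹ ∘ L⁻¹ + M₂ ∘ L⁻¹`. Both `L` and `M₁` are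
invertible: `L` is onto because `𝓛` is, and `M₁ x = M₁ y` forces
`𝓛 (x, 0) = 𝓛 (y, 0)` since both first coordinates are `L 0`. -/

namespace LinearEquiv

variable {R V W X Y : Type*} [Semiring R] [AddCommMonoid V] [Module R V]
  [AddCommMonoid W] [Module R W] [AddCommMonoid X] [Module R X] [AddCommMonoid Y] [Module R Y]
  (e : (V × W) ≃ₗ[R] (X × Y)) (L : W →ₗ[R] X)

theorem surjective_of_fst_apply_eq (hdep : ∀ p, (e p).1 = L p.2) : Function.Surjective L := by
  intro x
  obtain ⟨p, hp⟩ := e.surjective (x, 0)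
  exact ⟨p.2, by rw [← hdep p, hp]⟩

theorem injective_snd_comp_inl_of_fst_apply_eq (hdep : ∀ p, (e p).1 = L p.2) :
    Function.Injective (LinearMap.snd R X Y ∘ₗ e.toLinearMap ∘ₗ LinearMap.inl R V W) := by
  intro x y hxy
  have hfst : (e (x, 0)).1 = (e (y, 0)).1 := by rw [hdep, hdep]
  exact congrArg Prod.fst (e.injective (Prod.ext hfst hxy))

theorem apply_fst_eq_of_image_graph_subset (hdep : ∀ p, (e p).1 = L p.2) {F : V → W} {F' : X → Y}
    (hgraph : e '' {p | p.2 = F p.1} ⊆ {p | p.2 = F' p.1}) (a : V) :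
    F' (L (F a)) = (LinearMap.snd R X Y ∘ₗ e.toLinearMap ∘ₗ LinearMap.inl R V W) a +
      (LinearMap.snd R X Y ∘ₗ e.toLinearMap ∘ₗ LinearMap.inr R V W) (F a) := by
  have hmem : (e (a, F a)).2 = F' (e (a, F a)).1 := hgraph ⟨(a, F a), rfl, rfl⟩
  have hsplit : e (a, F a) = e (a, 0) + e (0, F a) := by rw [← map_add, Prod.mk_add_mk]; simp
  rw [← hdep (a, F a), ← hmem, hsplit]
  rfl

end LinearEquiv

/-- If `F` is a permutation and a linear permutation `𝓛 = (L₁, L₂)` of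
`𝔽₂^{2m}` maps the graph of `F` to the graph of `F'`, where `L₁(x,y) = L(y)`
depends only on the second variable, then `F' = R₁ ∘ F⁻¹ ∘ R₂ + R` for some
linear permutations `R₁, R₂` and a linear map `R`; moreover `L` is a
permutation. -/
theorem stmt_7 (m : ℕ) (F F' : (Fin m → ZMod 2) → (Fin m → ZMod 2))
    (hF : Function.Bijective F)
    (𝓛 : ((Fin m → ZMod 2) × (Fin m → ZMod 2)) ≃ₗ[ZMod 2]
         ((Fin m → ZMod 2) × (Fin m → ZMod 2)))
    (hL : 𝓛 '' {p | p.2 = F p.1} = {p | p.2 = F' p.1})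
    (L : (Fin m → ZMod 2) →ₗ[ZMod 2] (Fin m → ZMod 2))
    (hdep : ∀ p : (Fin m → ZMod 2) × (Fin m → ZMod 2), (𝓛 p).1 = L p.2) :
    (∃ (R₁ R₂ : (Fin m → ZMod 2) ≃ₗ[ZMod 2] (Fin m → ZMod 2))
       (R : (Fin m → ZMod 2) →ₗ[ZMod 2] (Fin m → ZMod 2)),
       ∀ x, F' x = R₁ (Function.invFun F (R₂ x)) + R x) ∧
    Function.Bijective L := by
  have hLinj : Function.Injective L :=
    LinearMap.injective_iff_surjective.2 (𝓛.surjective_of_fst_apply_eq L hdep)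
  set Leq := LinearEquiv.ofInjectiveEndo L hLinj
  set M₂ := LinearMap.snd _ _ _ ∘ₗ 𝓛.toLinearMap ∘ₗ LinearMap.inr _ _ _
  refine ⟨⟨LinearEquiv.ofInjectiveEndo _ (𝓛.injective_snd_comp_inl_of_fst_apply_eq L hdep),
    Leq.symm, M₂ ∘ₗ Leq.symm.toLinearMap, fun x => ?_⟩, Leq.bijective⟩
  have hinv : F (Function.invFun F (Leq.symm x)) = Leq.symm x := Function.invFun_eq (hF.2 _)
  calc F' x = F' (L (F (Function.invFun F (Leq.symm x)))) := by
        rw [hinv]; exact congrArg F' (Leq.apply_symm_apply x).symm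
    _ = _ := by
        rw [𝓛.apply_fst_eq_of_image_graph_subset L hdep hL.le, hinv]
        rfl
end

section
/- Let F : F_{2^m} → F_{2^m}. If there exists c ∈ F_{2^m}^* such that the algebraic degree of the Boolean function tr(cF(x)) is not in {0, 1, deg(F)}, then F is EA-inequivalent to every power function x ↦ x^d. -/
/-!
Write `q = 2 ^ m` and `K = 𝔽_q`. Since `x ^ q = x` on `K`, reducing exponents modulo `q - 1`
(into `[1, q - 1]`) does not increase their 2-weight, so the degree of a polynomial representation
bounds the algebraic degree. Additive maps are linearized polynomials `∑ aᵢ x ^ 2 ^ i`, which have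
degree `1`, and the weight of an exponent is subadditive, so the degree of a composition is at most
the product of the degrees. Hence EA-equivalence preserves `max (deg F) 1`.

If `F` were EA-equivalent to `x ↦ x ^ d`, then `deg F` and `deg tr(c F)` would agree with those of
`y ↦ y ^ d` and `y ↦ tr(c A₁ (y ^ d))` up to this `max _ 1`. The first has degree `w = w2 d'`, where
`d'` is the reduced exponent; the second is `∑ bᵢ y ^ (d 2 ^ i)`, whose reduced exponents are cyclic
shifts of `d'`, all of weight `w`, so its degree is `0` or `w`. Then `deg tr(c F) ∉ {0, 1}` forces
`deg tr(c F) = w = deg F`.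
-/

def w2 (k : ℕ) : ℕ := (Nat.digits 2 k).sum

/-- The algebraic degree of a function on `𝔽_{2^m}`: the max 2-weight of the
exponents with nonzero coefficient in its (unique) univariate polynomial
representation of degree `< 2^m`. -/
noncomputable def algDeg (m : ℕ) (F : GaloisField 2 m → GaloisField 2 m) : ℕ :=
  sInf {d : ℕ | ∃ p : Polynomial (GaloisField 2 m),
    (∀ x, p.eval x = F x) ∧ p.natDegree < 2 ^ m ∧ d = p.support.sup w2}

-- Legendre's formula `v₂(n!) = n - w2 n` and `a! b! ∣ (a + b)!`
open Nat in
theorem w2_add_le (a b : ℕ) : w2 (a + b) ≤ w2 a + w2 b := by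
  have hdvd : padicValNat 2 (a ! * b !) ≤ padicValNat 2 (a + b)! :=
    padicValNat_dvd_iff_le (factorial_ne_zero _) |>.mp
      (pow_padicValNat_dvd.trans (factorial_mul_factorial_dvd_factorial_add a b))
  rw [padicValNat.mul (factorial_ne_zero _) (factorial_ne_zero _)] at hdvd
  have ha := sub_one_mul_padicValNat_factorial (p := 2) a
  have hb := sub_one_mul_padicValNat_factorial (p := 2) b
  have hab := sub_one_mul_padicValNat_factorial (p := 2) (a + b)
  have := digit_sum_le 2 a
  have := digit_sum_le 2 b
  have := digit_sum_le 2 (a + b)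
  simp only [w2]
  omega

theorem w2_two_pow_mul (k n : ℕ) : w2 (2 ^ k * n) = w2 n := by
  rcases n.eq_zero_or_pos with rfl | hn
  · simp
  · simp [w2, Nat.digits_base_pow_mul one_lt_two hn]

theorem w2_two_mul_add_one (n : ℕ) : w2 (2 * n + 1) = w2 n + 1 := by
  rw [w2, Nat.digits_def' one_lt_two (by omega), List.sum_cons, ← w2,
    show (2 * n + 1) / 2 = n by omega]
  omega

theorem w2_two_pow (k : ℕ) : w2 (2 ^ k) = 1 := by
  simpa [w2] using w2_two_pow_mul k 1

theorem w2_add_two_pow_mul {m r : ℕ} (hr : r < 2 ^ m) (q : ℕ) :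
    w2 (r + 2 ^ m * q) = w2 r + w2 q := by
  rcases q.eq_zero_or_pos with rfl | hq
  · simp [w2]
  have hlen := (Nat.digits_length_le_iff one_lt_two r).mpr hr
  have := Nat.digits_append_zeroes_append_digits (b := 2) (k := m - (Nat.digits 2 r).length)
    (n := r) one_lt_two hq
  rw [Nat.add_sub_cancel' hlen] at this
  simp [w2, ← this]

/-- On `𝔽_{2^m}`, `x ^ reduceExp m n = x ^ n` (`pow_reduceExp`); the exponent `0` is kept apart
because `0 ^ 0 ≠ 0 ^ (2 ^ m - 1)`. -/
def reduceExp (m n : ℕ) : ℕ := if n = 0 then 0 else (n - 1) % (2 ^ m - 1) + 1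

section ReduceExp

variable {m : ℕ}

@[simp]
theorem reduceExp_eq_zero_iff {n : ℕ} : reduceExp m n = 0 ↔ n = 0 := by
  unfold reduceExp; split_ifs <;> simp_all

theorem reduceExp_modEq (n : ℕ) : reduceExp m n ≡ n [MOD 2 ^ m - 1] := by
  unfold reduceExp
  split_ifs with hn
  · rw [hn]
  · calc (n - 1) % (2 ^ m - 1) + 1 ≡ n - 1 + 1 [MOD 2 ^ m - 1] :=
          (Nat.mod_modEq _ _).add_right 1
      _ = n := Nat.sub_add_cancel (Nat.one_le_iff_ne_zero.mpr hn)

theorem reduceExp_eq_of_modEq {a b : ℕ} (h : a ≡ b [MOD 2 ^ m - 1]) (ha : a ≠ 0) (hb : b ≠ 0) :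
    reduceExp m a = reduceExp m b := by
  have h' : a - 1 ≡ b - 1 [MOD 2 ^ m - 1] := by
    refine Nat.ModEq.add_right_cancel' 1 ?_
    rwa [Nat.sub_add_cancel (Nat.one_le_iff_ne_zero.mpr ha),
      Nat.sub_add_cancel (Nat.one_le_iff_ne_zero.mpr hb)]
  simp only [reduceExp, if_neg ha, if_neg hb]
  exact congrArg (· + 1) h'

theorem reduceExp_of_lt {n : ℕ} (hn : n < 2 ^ m) : reduceExp m n = n := by
  unfold reduceExp
  split_ifs with h0
  · exact h0.symm
  · rw [Nat.mod_eq_of_lt (by omega)]; omega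

theorem reduceExp_lt (hm : 0 < m) (n : ℕ) : reduceExp m n < 2 ^ m := by
  have : 2 ≤ 2 ^ m := Nat.le_self_pow hm.ne' 2
  unfold reduceExp
  split_ifs
  · omega
  · have := Nat.mod_lt (n - 1) (show 0 < 2 ^ m - 1 by omega); omega

theorem w2_reduceExp_le (hm : 0 < m) (n : ℕ) : w2 (reduceExp m n) ≤ w2 n := by
  induction n using Nat.strong_induction_on with
  | _ n ih =>
  rcases lt_or_ge n (2 ^ m) with hn | hn
  · rw [reduceExp_of_lt hn]
  set q := n / 2 ^ m
  set r := n % 2 ^ m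
  have hr : r < 2 ^ m := Nat.mod_lt _ (by positivity)
  have hq : 0 < q := Nat.div_pos hn (by positivity)
  have hn_eq : r + 2 ^ m * q = n := Nat.mod_add_div n (2 ^ m)
  have hfold : r + 2 ^ m * q ≡ r + q [MOD 2 ^ m - 1] := by
    refine Nat.ModEq.add_left r ?_
    conv_rhs => rw [← one_mul q]
    exact Nat.ModEq.mul_right q (Nat.modEq_sub Nat.one_le_two_pow)
  have hlt : r + q < n := by
    have : 2 * q ≤ 2 ^ m * q := Nat.mul_le_mul_right q (Nat.le_self_pow hm.ne' 2)
    omega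
  calc w2 (reduceExp m n) = w2 (reduceExp m (r + q)) := by
        rw [reduceExp_eq_of_modEq (hn_eq ▸ hfold) (by omega) (by omega)]
    _ ≤ w2 (r + q) := ih _ hlt
    _ ≤ w2 r + w2 q := w2_add_le r q
    _ = w2 n := by rw [← hn_eq, w2_add_two_pow_mul hr]

theorem w2_reduceExp_mul_two_pow (hm : 0 < m) (n i : ℕ) :
    w2 (reduceExp m (n * 2 ^ i)) = w2 (reduceExp m n) := by
  rcases eq_or_ne n 0 with rfl | hn
  · simp
  have hshift : ∀ a j, a ≠ 0 →
      reduceExp m (a * 2 ^ j) = reduceExp m (reduceExp m a * 2 ^ j) := fun a j ha =>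
    reduceExp_eq_of_modEq ((reduceExp_modEq a).symm.mul_right _) (by positivity) (by simp [ha])
  have hle : ∀ a j, a ≠ 0 → w2 (reduceExp m (a * 2 ^ j)) ≤ w2 (reduceExp m a) := by
    intro a j ha
    rw [hshift a j ha]
    exact (w2_reduceExp_le hm _).trans (by rw [mul_comm, w2_two_pow_mul])
  -- `2 ^ (m * i) ≡ 1`, so shifting once more by `m * i - i` returns to `n`
  have hback : reduceExp m n = reduceExp m (n * 2 ^ i * 2 ^ (m * i - i)) := by
    refine reduceExp_eq_of_modEq ?_ hn (by positivity)
    calc n = n * 1 ^ i := by rw [one_pow, mul_one]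
      _ ≡ n * (2 ^ m) ^ i [MOD 2 ^ m - 1] :=
        ((Nat.modEq_sub Nat.one_le_two_pow).pow i).symm.mul_left n
      _ = n * 2 ^ i * 2 ^ (m * i - i) := by
        rw [mul_assoc, ← pow_add, Nat.add_sub_cancel' (Nat.le_mul_of_pos_left i hm), pow_mul]
  refine le_antisymm (hle n i hn) ?_
  rw [hback]
  exact hle _ _ (by positivity)

end ReduceExp

namespace Polynomial

variable {R : Type*}

def weightDeg [Semiring R] (p : R[X]) : ℕ := p.support.sup w2

section Semiring

variable [Semiring R]

theorem weightDeg_le_iff {p : R[X]} {D : ℕ} :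
    weightDeg p ≤ D ↔ ∀ n, p.coeff n ≠ 0 → w2 n ≤ D := by
  simp [weightDeg]

theorem w2_le_weightDeg {p : R[X]} {n : ℕ} (h : p.coeff n ≠ 0) : w2 n ≤ weightDeg p :=
  Finset.le_sup (mem_support_iff.mpr h)

theorem weightDeg_C_mul_X_pow_le (a : R) (n : ℕ) : weightDeg (C a * X ^ n) ≤ w2 n := by
  refine weightDeg_le_iff.mpr fun k hk => ?_
  rw [coeff_C_mul_X_pow] at hk
  rw [show k = n by by_contra h; simp [h] at hk]

theorem weightDeg_C (a : R) : weightDeg (C a) = 0 := by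
  simpa [w2] using weightDeg_C_mul_X_pow_le a 0

theorem weightDeg_add_le (p q : R[X]) :
    weightDeg (p + q) ≤ max (weightDeg p) (weightDeg q) := by
  refine weightDeg_le_iff.mpr fun n hn => ?_
  by_cases hp : p.coeff n = 0
  · rw [coeff_add, hp, zero_add] at hn
    exact (w2_le_weightDeg hn).trans (le_max_right _ _)
  · exact (w2_le_weightDeg hp).trans (le_max_left _ _)

theorem weightDeg_sum_le {ι : Type*} (s : Finset ι) (f : ι → R[X]) {D : ℕ}
    (h : ∀ i ∈ s, weightDeg (f i) ≤ D) : weightDeg (∑ i ∈ s, f i) ≤ D :=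
  Finset.sum_induction f (fun p => weightDeg p ≤ D)
    (fun p q hp hq => (weightDeg_add_le p q).trans (max_le hp hq)) (by simp [weightDeg]) h

theorem weightDeg_mul_le (p q : R[X]) : weightDeg (p * q) ≤ weightDeg p + weightDeg q := by
  refine weightDeg_le_iff.mpr fun n hn => ?_
  rw [coeff_mul] at hn
  obtain ⟨⟨a, b⟩, hab, hne⟩ := Finset.exists_ne_zero_of_sum_ne_zero hn
  obtain rfl := Finset.HasAntidiagonal.mem_antidiagonal.mp hab
  exact (w2_add_le a b).trans (add_le_add (w2_le_weightDeg (left_ne_zero_of_mul hne))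
    (w2_le_weightDeg (right_ne_zero_of_mul hne)))

end Semiring

section CharTwo

variable [CommSemiring R] [CharP R 2]

theorem weightDeg_sq_le (p : R[X]) : weightDeg (p ^ 2) ≤ weightDeg p := by
  refine weightDeg_le_iff.mpr fun n hn => ?_
  -- in characteristic 2, `p ^ 2` is `expand 2 p` with squared coefficients
  rw [← map_frobenius_expand, coeff_map, coeff_expand two_pos] at hn
  split_ifs at hn with h2
  · obtain ⟨k, rfl⟩ := h2
    rw [show 2 * k = 2 ^ 1 * k by rw [pow_one], w2_two_pow_mul]
    refine w2_le_weightDeg fun h => hn ?_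
    rw [Nat.mul_div_cancel_left k two_pos, h, map_zero]
  · exact absurd (map_zero _) hn

theorem weightDeg_pow_le (p : R[X]) (e : ℕ) : weightDeg (p ^ e) ≤ w2 e * weightDeg p := by
  induction e using Nat.strong_induction_on with
  | _ e ih =>
  rcases e.eq_zero_or_pos with rfl | he
  · simpa [w2] using (weightDeg_C (1 : R)).le
  obtain ⟨k, rfl | rfl⟩ := e.even_or_odd'
  · calc weightDeg (p ^ (2 * k)) ≤ weightDeg (p ^ k) := by
          rw [mul_comm, pow_mul]; exact weightDeg_sq_le _
      _ ≤ w2 k * weightDeg p := ih k (by omega)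
      _ = w2 (2 * k) * weightDeg p := by rw [← pow_one 2, w2_two_pow_mul]
  · calc weightDeg (p ^ (2 * k + 1)) ≤ weightDeg ((p ^ k) ^ 2) + weightDeg p := by
          rw [pow_succ, mul_comm 2 k, pow_mul]; exact weightDeg_mul_le _ _
      _ ≤ w2 k * weightDeg p + weightDeg p := by
          gcongr; exact (weightDeg_sq_le _).trans (ih k (by omega))
      _ = w2 (2 * k + 1) * weightDeg p := by rw [w2_two_mul_add_one, add_one_mul]

theorem weightDeg_comp_le (p q : R[X]) : weightDeg (p.comp q) ≤ weightDeg p * weightDeg q := by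
  rw [comp_eq_sum_left, sum_def]
  refine weightDeg_sum_le _ _ fun e he => ?_
  calc weightDeg (C (p.coeff e) * q ^ e) ≤ weightDeg (C (p.coeff e)) + weightDeg (q ^ e) :=
        weightDeg_mul_le _ _
    _ ≤ w2 e * weightDeg q := by rw [weightDeg_C, zero_add]; exact weightDeg_pow_le q e
    _ ≤ weightDeg p * weightDeg q :=
        Nat.mul_le_mul_right _ (w2_le_weightDeg (mem_support_iff.mp he))

end CharTwo

noncomputable def reduceExps [Semiring R] (m : ℕ) (p : R[X]) : R[X] :=
  p.sum fun e a => C a * X ^ reduceExp m e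

section ReduceExps

variable [Semiring R] {m : ℕ}

theorem natDegree_reduceExps_lt (hm : 0 < m) (p : R[X]) : (reduceExps m p).natDegree < 2 ^ m :=
  (natDegree_sum_le_of_forall_le _ _ fun e _ =>
    (natDegree_C_mul_X_pow_le _ _).trans (Nat.le_sub_one_of_lt (reduceExp_lt hm e))).trans_lt
    (Nat.sub_one_lt (by positivity))

theorem weightDeg_reduceExps_le (hm : 0 < m) (p : R[X]) :
    weightDeg (reduceExps m p) ≤ weightDeg p :=
  weightDeg_sum_le _ _ fun e he => (weightDeg_C_mul_X_pow_le _ _).trans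
    ((w2_reduceExp_le hm e).trans (w2_le_weightDeg (mem_support_iff.mp he)))

end ReduceExps

end Polynomial

open Polynomial

section FiniteField

variable {K : Type*} [Field K]

theorem pow_reduceExp [Finite K] {m : ℕ} (hK : Nat.card K = 2 ^ m) (x : K) (n : ℕ) :
    x ^ reduceExp m n = x ^ n := by
  have := Fintype.ofFinite K
  rcases eq_or_ne x 0 with rfl | hx
  · by_cases hn : n = 0 <;> simp [hn, reduceExp]
  have hunit : x ^ (2 ^ m - 1) = 1 := by
    rw [← hK, Nat.card_eq_fintype_card]; exact FiniteField.pow_card_sub_one_eq_one x hx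
  rw [pow_eq_pow_mod _ hunit, pow_eq_pow_mod n hunit, reduceExp_modEq n]

theorem eval_reduceExps [Finite K] {m : ℕ} (hK : Nat.card K = 2 ^ m) (p : K[X]) (x : K) :
    (reduceExps m p).eval x = p.eval x := by
  conv_rhs => rw [eval_eq_sum, sum_def]
  rw [reduceExps, sum_def, eval_finsetSum]
  simp only [eval_mul, eval_C, eval_pow, eval_X, pow_reduceExp hK]

variable {p n : ℕ} [Fact p.Prime] [Algebra (ZMod p) K]

def linearizedMap (a : Fin n → K) : K →ₗ[ZMod p] K :=
  AddMonoidHom.toZModLinearMap p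
    { toFun := fun x => ∑ i, a i * x ^ p ^ (i : ℕ)
      map_zero' := by simp [Fact.out (p := p.Prime) |>.ne_zero]
      map_add' := fun x y => by
        have := charP_of_injective_algebraMap (algebraMap (ZMod p) K).injective p
        simp only [add_pow_char_pow, mul_add, Finset.sum_add_distrib] }

theorem linearizedMap_apply (a : Fin n → K) (x : K) :
    linearizedMap (p := p) a x = ∑ i, a i * x ^ p ^ (i : ℕ) := rfl

theorem linearizedMap_injective [Finite K] (hK : Nat.card K = p ^ n) :
    Function.Injective (linearizedMap (p := p) (n := n) (K := K)) := by
  intro a b hab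
  have := Fintype.ofFinite K
  have hp := (Fact.out : p.Prime)
  set P : K[X] := ∑ j, C (a j - b j) * X ^ p ^ (j : ℕ)
  have hP : P = 0 := by
    refine eq_zero_of_natDegree_lt_card_of_eval_eq_zero' P Finset.univ (fun x _ => ?_) ?_
    · have := LinearMap.congr_fun hab x
      simp only [linearizedMap_apply] at this
      simp [P, eval_finsetSum, sub_mul, Finset.sum_sub_distrib, this]
    · rw [Finset.card_univ, ← Nat.card_eq_fintype_card, hK]
      refine (natDegree_sum_le_of_forall_le _ _ fun j _ => ?_).trans_lt
        (Nat.sub_one_lt (pow_pos hp.pos n).ne')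
      exact (natDegree_C_mul_X_pow_le _ _).trans
        (Nat.le_sub_one_of_lt (Nat.pow_lt_pow_right hp.one_lt j.isLt))
  funext i
  have hcoeff := congrArg (coeff · (p ^ (i : ℕ))) hP
  simp only [P, finsetSum_coeff, coeff_C_mul_X_pow, coeff_zero] at hcoeff
  rw [Finset.sum_eq_single i (fun j _ hj => if_neg fun h => hj (Fin.ext
    (Nat.pow_right_injective hp.two_le h).symm)) (by simp), if_pos rfl] at hcoeff
  exact sub_eq_zero.mp hcoeff

theorem exists_linearized [Finite K] (hK : Nat.card K = p ^ n) (f : K →+ K) :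
    ∃ a : Fin n → K, ∀ x, f x = ∑ i, a i * x ^ p ^ (i : ℕ) := by
  have := Fintype.ofFinite K
  have hrank : Module.finrank (ZMod p) K = n := by
    have := Module.card_eq_pow_finrank (K := ZMod p) (V := K)
    rw [← Nat.card_eq_fintype_card, hK, ZMod.card] at this
    exact (Nat.pow_right_injective (Fact.out : p.Prime).two_le this).symm
  -- both sides have `card K ^ n` elements, so the injective map is onto
  let e : (Fin n → K) ≃ (K →ₗ[ZMod p] K) :=
    ((Module.finBasisOfFinrankEq (ZMod p) K hrank).constr (ZMod p)).toEquiv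
  obtain ⟨a, ha⟩ := (linearizedMap_injective hK).surjective_of_finite e (f.toZModLinearMap p)
  exact ⟨a, fun x => by rw [← linearizedMap_apply, ha]; rfl⟩

end FiniteField

section AlgDeg

variable {m : ℕ}

local notation "K" => GaloisField 2 m

theorem algDeg_le_weightDeg (hm : 0 < m) {F : K → K} {p : K[X]} (hp : ∀ x, p.eval x = F x) :
    algDeg m F ≤ weightDeg p := by
  refine (Nat.sInf_le ?_).trans (weightDeg_reduceExps_le hm p)
  exact ⟨reduceExps m p, fun x => by rw [eval_reduceExps (GaloisField.card 2 m hm.ne'), hp],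
    natDegree_reduceExps_lt hm p, rfl⟩

theorem exists_weightDeg_eq_algDeg (hm : 0 < m) (F : K → K) :
    ∃ p : K[X], (∀ x, p.eval x = F x) ∧ p.natDegree < 2 ^ m ∧ weightDeg p = algDeg m F := by
  have := Fintype.ofFinite K
  classical
  have hne : {d : ℕ | ∃ p : K[X],
      (∀ x, p.eval x = F x) ∧ p.natDegree < 2 ^ m ∧ d = p.support.sup w2}.Nonempty := by
    let L := Lagrange.interpolate Finset.univ id F
    have hL : ∀ x, (reduceExps m L).eval x = F x := fun x => by
      rw [eval_reduceExps (GaloisField.card 2 m hm.ne')]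
      exact Lagrange.eval_interpolate_at_node _ Function.injective_id.injOn (Finset.mem_univ x)
    exact ⟨weightDeg (reduceExps m L), reduceExps m L, hL, natDegree_reduceExps_lt hm L, rfl⟩
  obtain ⟨p, hp, hdeg, hw⟩ := Nat.sInf_mem hne
  exact ⟨p, hp, hdeg, hw.symm⟩

theorem algDeg_eq_weightDeg (hm : 0 < m) {F : K → K} {p : K[X]} (hp : ∀ x, p.eval x = F x)
    (hdeg : p.natDegree < 2 ^ m) : algDeg m F = weightDeg p := by
  have := Fintype.ofFinite K
  obtain ⟨q, hq, hqdeg, hqw⟩ := exists_weightDeg_eq_algDeg hm F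
  have : q = p := by
    refine eq_of_natDegree_lt_card_of_eval_eq' q p Finset.univ (fun x _ => by rw [hq, hp]) ?_
    rw [Finset.card_univ, ← Nat.card_eq_fintype_card, GaloisField.card 2 m hm.ne']
    exact max_lt hqdeg hdeg
  rw [← hqw, this]

theorem algDeg_comp_le (hm : 0 < m) (F G : K → K) :
    algDeg m (fun x => F (G x)) ≤ algDeg m F * algDeg m G := by
  obtain ⟨p, hp, -, hpw⟩ := exists_weightDeg_eq_algDeg hm F
  obtain ⟨q, hq, -, hqw⟩ := exists_weightDeg_eq_algDeg hm G
  calc algDeg m (fun x => F (G x)) ≤ weightDeg (p.comp q) :=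
        algDeg_le_weightDeg hm fun x => by rw [eval_comp, hq, hp]
    _ ≤ algDeg m F * algDeg m G := hpw ▸ hqw ▸ weightDeg_comp_le p q

theorem algDeg_add_le (hm : 0 < m) (F G : K → K) :
    algDeg m (fun x => F x + G x) ≤ max (algDeg m F) (algDeg m G) := by
  obtain ⟨p, hp, -, hpw⟩ := exists_weightDeg_eq_algDeg hm F
  obtain ⟨q, hq, -, hqw⟩ := exists_weightDeg_eq_algDeg hm G
  calc algDeg m (fun x => F x + G x) ≤ weightDeg (p + q) :=
        algDeg_le_weightDeg hm fun x => by rw [eval_add, hp, hq]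
    _ ≤ max (algDeg m F) (algDeg m G) := hpw ▸ hqw ▸ weightDeg_add_le p q

theorem algDeg_affine_le (hm : 0 < m) (L : K →+ K) (k : K) :
    algDeg m (fun x => L x + k) ≤ 1 := by
  obtain ⟨a, ha⟩ := exists_linearized (GaloisField.card 2 m hm.ne') L
  refine (algDeg_le_weightDeg hm (p := ∑ i, C (a i) * X ^ 2 ^ (i : ℕ) + C k) fun x => ?_).trans ?_
  · simp [ha, eval_finsetSum]
  · refine (weightDeg_add_le _ _).trans (max_le ?_ (by rw [weightDeg_C]; exact zero_le_one))
    exact weightDeg_sum_le _ _ fun i _ => (weightDeg_C_mul_X_pow_le _ _).trans (w2_two_pow _).le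

theorem algDeg_pow (hm : 0 < m) (d : ℕ) : algDeg m (fun y : K => y ^ d) = w2 (reduceExp m d) := by
  rw [algDeg_eq_weightDeg hm (p := X ^ reduceExp m d)
    (fun y => by rw [eval_pow, eval_X, pow_reduceExp (GaloisField.card 2 m hm.ne')])
    (by rw [natDegree_X_pow]; exact reduceExp_lt hm d)]
  simp [weightDeg]

theorem algDeg_additive_comp_pow (hm : 0 < m) (L : K →+ K) (d : ℕ) :
    algDeg m (fun y => L (y ^ d)) = 0 ∨ algDeg m (fun y => L (y ^ d)) = w2 (reduceExp m d) := by
  have hK := GaloisField.card 2 m hm.ne'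
  obtain ⟨a, ha⟩ := exists_linearized hK L
  -- `L (y ^ d) = ∑ aᵢ y ^ (d 2 ^ i)`, and the shifted exponents `d 2 ^ i` all have the same weight
  set P : K[X] := ∑ i, C (a i) * X ^ reduceExp m (d * 2 ^ (i : ℕ))
  have hP : ∀ y, P.eval y = L (y ^ d) := fun y => by
    simp [P, ha, eval_finsetSum, pow_reduceExp hK, pow_mul]
  have hdeg : P.natDegree < 2 ^ m :=
    (natDegree_sum_le_of_forall_le _ _ fun i _ => (natDegree_C_mul_X_pow_le _ _).trans
      (Nat.le_sub_one_of_lt (reduceExp_lt hm _))).trans_lt (Nat.sub_one_lt (by positivity))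
  have hweight : ∀ n, P.coeff n ≠ 0 → w2 n = w2 (reduceExp m d) := by
    intro n hn
    simp only [P, finsetSum_coeff, coeff_C_mul_X_pow] at hn
    obtain ⟨i, -, hi⟩ := Finset.exists_ne_zero_of_sum_ne_zero hn
    rw [show n = reduceExp m (d * 2 ^ (i : ℕ)) by by_contra h; simp [h] at hi]
    exact w2_reduceExp_mul_two_pow hm d i
  rw [algDeg_eq_weightDeg hm hP hdeg]
  rcases eq_or_ne P 0 with h0 | h0
  · simp [h0, weightDeg]
  obtain ⟨n, hn⟩ := support_nonempty.mpr h0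
  rw [mem_support_iff] at hn
  exact .inr (le_antisymm (weightDeg_le_iff.mpr fun k hk => (hweight k hk).le)
    (hweight n hn ▸ w2_le_weightDeg hn))

theorem algDeg_ea_le (hm : 0 < m) (H : K → K) (L₁ L₂ L₃ : K →+ K) (k₂ k₃ : K) :
    algDeg m (fun x => L₁ (H (L₂ x + k₂)) + L₃ x + k₃) ≤ max (algDeg m H) 1 := by
  have hL₁ : algDeg m (fun y => L₁ y) ≤ 1 := by simpa using algDeg_affine_le hm L₁ 0
  have hinner := algDeg_comp_le hm H (fun x => L₂ x + k₂)
  have houter := algDeg_comp_le hm (fun y => L₁ y) (fun x => H (L₂ x + k₂))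
  simp only [add_assoc]
  calc algDeg m (fun x => L₁ (H (L₂ x + k₂)) + (L₃ x + k₃))
      ≤ max (algDeg m fun x => L₁ (H (L₂ x + k₂))) (algDeg m fun x => L₃ x + k₃) :=
        algDeg_add_le hm _ _
    _ ≤ max (1 * (algDeg m H * 1)) 1 :=
        max_le_max (houter.trans (Nat.mul_le_mul hL₁
          (hinner.trans (Nat.mul_le_mul_left _ (algDeg_affine_le hm L₂ k₂)))))
          (algDeg_affine_le hm L₃ k₃)
    _ = max (algDeg m H) 1 := by rw [one_mul, mul_one]

theorem max_algDeg_one_eq_of_ea (hm : 0 < m) {F H : K → K} (L₁ L₂ : K ≃+ K) (L₃ : K →+ K)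
    (k₂ k₃ : K) (hF : ∀ x, F x = L₁ (H (L₂ x + k₂)) + L₃ x + k₃) :
    max (algDeg m F) 1 = max (algDeg m H) 1 := by
  refine le_antisymm (max_le ?_ (le_max_right _ _)) (max_le ?_ (le_max_right _ _))
  · rw [show F = _ from funext hF]
    exact algDeg_ea_le hm H L₁ L₂ L₃ k₂ k₃
  · set k₂' := -L₂.symm k₂
    have hH : H = fun y => L₁.symm (F (L₂.symm y + k₂'))
        + (-((L₁.symm : K →+ K).comp (L₃.comp L₂.symm))) y + -L₁.symm (L₃ k₂' + k₃) := by
      funext y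
      simp [hF, k₂']
      abel
    rw [hH]
    exact algDeg_ea_le hm F L₁.symm L₂.symm _ k₂' _

end AlgDeg

theorem stmt_8_general (m : ℕ) (hm : 0 < m) (F : GaloisField 2 m → GaloisField 2 m)
    (c : GaloisField 2 m)
    (hdeg : algDeg m (fun x => algebraMap (ZMod 2) (GaloisField 2 m)
        (Algebra.trace (ZMod 2) (GaloisField 2 m) (c * F x)))
      ∉ ({0, 1, algDeg m F} : Set ℕ)) :
    ¬ ∃ (d : ℕ) (A₁ A₂ : GaloisField 2 m ≃ₗ[ZMod 2] GaloisField 2 m)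
        (A : GaloisField 2 m →ₗ[ZMod 2] GaloisField 2 m)
        (c₁ c₂ c₀ : GaloisField 2 m),
        ∀ x, F x = A₁ ((A₂ x + c₂) ^ d) + c₁ + A x + c₀ := by
  rintro ⟨d, A₁, A₂, A, c₁, c₂, c₀, hF⟩
  let τ : GaloisField 2 m →+ GaloisField 2 m :=
    (algebraMap (ZMod 2) _).toAddMonoidHom.comp
      ((Algebra.trace (ZMod 2) _).toAddMonoidHom.comp (AddMonoidHom.mulLeft c))
  have hFdeg := max_algDeg_one_eq_of_ea hm (F := F) (H := fun y => y ^ d)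
    A₁.toAddEquiv A₂.toAddEquiv A.toAddMonoidHom c₂ (c₁ + c₀) fun x => by simp [hF x]; abel
  have hGdeg := max_algDeg_one_eq_of_ea hm
    (F := fun x => algebraMap (ZMod 2) _ (Algebra.trace (ZMod 2) _ (c * F x)))
    (H := fun y => (τ.comp A₁.toAddMonoidHom) (y ^ d))
    (AddEquiv.refl _) A₂.toAddEquiv (τ.comp A.toAddMonoidHom) c₂ (τ (c₁ + c₀))
    fun x => by rw [hF x]; simp [τ, mul_add]; abel
  have hpow := algDeg_pow hm d
  have htr := algDeg_additive_comp_pow hm (τ.comp A₁.toAddMonoidHom) d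
  simp only [Set.mem_insert_iff, Set.mem_singleton_iff, not_or] at hdeg
  omega

/-- If for some `c ≠ 0` the algebraic degree of `x ↦ tr(c·F(x))` is not in
`{0, 1, deg F}`, then `F` is EA-inequivalent to every power function. -/
theorem stmt_8 (m : ℕ) (hm : 0 < m) (F : GaloisField 2 m → GaloisField 2 m)
    (c : GaloisField 2 m) (hc : c ≠ 0)
    (hdeg : algDeg m (fun x => algebraMap (ZMod 2) (GaloisField 2 m)
        (Algebra.trace (ZMod 2) (GaloisField 2 m) (c * F x)))
      ∉ ({0, 1, algDeg m F} : Set ℕ)) :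
    ¬ ∃ (d : ℕ) (A₁ A₂ : GaloisField 2 m ≃ₗ[ZMod 2] GaloisField 2 m)
        (A : GaloisField 2 m →ₗ[ZMod 2] GaloisField 2 m)
        (c₁ c₂ c₀ : GaloisField 2 m),
        ∀ x, F x = A₁ ((A₂ x + c₂) ^ d) + c₁ + A x + c₀ :=
  stmt_8_general m hm F c hdeg
end

section
/- Let F(x) = L(x^{2^i+1}) + L'(x) on F_{2^m} with L, L' linear (additive) maps and gcd(m,i)=1. Then F is a bijection if and only if for every u ∈ F_{2^m}^* and every v ∈ F_{2^m} with tr(v) = tr(1), one has L(u^{2^i+1} v) ≠ L'(u). -/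
/-!
Over `𝔽_2`, `F(x) + F(x + u) = L(u^{2^i+1}(t^{2^i} + t + 1)) + L'(u)` with `x = u t`, so `F` is
injective iff this never vanishes for `u ≠ 0`. Since `gcd(i, m) = 1`, the only fixed points of
`x ↦ x^{2^i}` are `0` and `1`, so the `𝔽_2`-linear map `t ↦ t^{2^i} + t` has a kernel of
dimension one; its image lies in the trace-zero hyperplane and therefore fills it. Hence
`t^{2^i} + t + 1` runs exactly over the elements of trace `tr(1)`.
-/

open Module Function

theorem isPeriodicPt_pow_iff {M : Type*} [Monoid M] (k n : ℕ) (x : M) :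
    IsPeriodicPt (· ^ k) n x ↔ x ^ k ^ n = x := by
  rw [IsPeriodicPt, IsFixedPt, pow_iterate]

theorem CharTwo.mul_pow_two_pow_succ_add_mul_add_pow_two_pow_succ {R : Type*} [CommRing R]
    [CharP R 2] (i : ℕ) (u t : R) :
    (u * t) ^ (2 ^ i + 1) + (u * t + u) ^ (2 ^ i + 1) = u ^ (2 ^ i + 1) * (t ^ 2 ^ i + t + 1) := by
  rw [pow_succ, pow_succ, add_pow_char_pow, mul_pow]
  linear_combination (u ^ 2 ^ i * t ^ 2 ^ i * u * t) * CharTwo.two_eq_zero (R := R)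

theorem injective_iff_forall_apply_mul_ne_apply_mul_add {K β : Type*} [DivisionRing K]
    (F : K → β) : Injective F ↔ ∀ u : K, u ≠ 0 → ∀ t, F (u * t) ≠ F (u * t + u) := by
  refine ⟨fun hF u hu t h ↦ hu (by simpa using hF h), fun h x y hxy ↦ ?_⟩
  by_contra hne
  have hu : y - x ≠ 0 := sub_ne_zero.mpr (Ne.symm hne)
  refine h (y - x) hu ((y - x)⁻¹ * x) ?_
  rwa [mul_inv_cancel_left₀ hu, add_sub_cancel]

namespace FiniteField

theorem trace_pow_prime_pow {K : Type*} [Field K] [Finite K] (p : ℕ) [Fact p.Prime]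
    [Algebra (ZMod p) K] (x : K) (j : ℕ) :
    Algebra.trace (ZMod p) K (x ^ p ^ j) = Algebra.trace (ZMod p) K x := by
  simpa [AlgEquiv.coe_pow, coe_frobeniusAlgEquivOfAlgebraic_iterate] using
    Algebra.trace_eq_of_algEquiv (frobeniusAlgEquivOfAlgebraic (ZMod p) K ^ j) x

variable {K : Type*} [Field K] [Finite K] [Algebra (ZMod 2) K] {i : ℕ}

theorem eq_zero_or_one_of_pow_two_pow_eq_self (hi : (finrank (ZMod 2) K).Coprime i)
    {x : K} (hx : x ^ 2 ^ i = x) : x = 0 ∨ x = 1 := by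
  have := Fintype.ofFinite K
  have hn : x ^ 2 ^ finrank (ZMod 2) K = x := by
    have h := pow_card x
    rwa [card_eq_pow_finrank (K := ZMod 2), ZMod.card] at h
  have h1 := ((isPeriodicPt_pow_iff 2 _ x).mpr hn).gcd ((isPeriodicPt_pow_iff 2 i x).mpr hx)
  rw [hi.gcd_eq_one, isPeriodicPt_pow_iff, pow_one, sq] at h1
  exact IsIdempotentElem.iff_eq_zero_or_one.mp h1

theorem range_pow_two_pow_add_self (hi : (finrank (ZMod 2) K).Coprime i) :
    Set.range (fun t : K ↦ t ^ 2 ^ i + t) = {v | Algebra.trace (ZMod 2) K v = 0} := by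
  have := charP_of_injective_algebraMap' (ZMod 2) (A := K) 2
  let φ : K →ₗ[ZMod 2] K :=
    (frobeniusAlgEquivOfAlgebraic (ZMod 2) K ^ i).toLinearMap + LinearMap.id
  have hφ (t : K) : φ t = t ^ 2 ^ i + t := by
    simp [φ, AlgEquiv.coe_pow, coe_frobeniusAlgEquivOfAlgebraic_iterate]
  have hker : LinearMap.ker φ ≤ Submodule.span (ZMod 2) {1} := by
    intro x hx
    rw [LinearMap.mem_ker, hφ, CharTwo.add_eq_zero] at hx
    rcases eq_zero_or_one_of_pow_two_pow_eq_self hi hx with rfl | rfl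
    · exact Submodule.zero_mem _
    · exact Submodule.subset_span rfl
  have hle : LinearMap.range φ ≤ LinearMap.ker (Algebra.trace (ZMod 2) K) := by
    rintro _ ⟨t, rfl⟩
    rw [LinearMap.mem_ker, hφ, map_add, trace_pow_prime_pow, CharTwo.add_self_eq_zero]
  have hrank := LinearMap.finrank_range_add_finrank_ker φ
  have htrace := LinearMap.finrank_range_add_finrank_ker (Algebra.trace (ZMod 2) K)
  rw [LinearMap.range_eq_top.mpr (Algebra.trace_surjective _ _), finrank_top, finrank_self]
    at htrace
  have hker1 := (Submodule.finrank_mono hker).trans_eq (finrank_span_singleton one_ne_zero)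
  have heq := Submodule.eq_of_le_of_finrank_le hle (by omega)
  ext v
  simp [← hφ, ← LinearMap.mem_range, heq]

theorem exists_pow_two_pow_add_self_add_one_eq_iff (hi : (finrank (ZMod 2) K).Coprime i)
    (v : K) : (∃ t : K, t ^ 2 ^ i + t + 1 = v) ↔
      Algebra.trace (ZMod 2) K v = Algebra.trace (ZMod 2) K 1 := by
  have h := Set.ext_iff.mp (range_pow_two_pow_add_self hi) (v - 1)
  simpa [← eq_sub_iff_add_eq, sub_eq_zero] using h

theorem injective_comp_pow_two_pow_succ_add_iff (hi : (finrank (ZMod 2) K).Coprime i)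
    (L L' : K →ₗ[ZMod 2] K) :
    Injective (fun x : K ↦ L (x ^ (2 ^ i + 1)) + L' x) ↔
      ∀ u : K, u ≠ 0 → ∀ v : K, Algebra.trace (ZMod 2) K v = Algebra.trace (ZMod 2) K 1 →
        L (u ^ (2 ^ i + 1) * v) ≠ L' u := by
  have := charP_of_injective_algebraMap' (ZMod 2) (A := K) 2
  have hne (u t : K) : L ((u * t) ^ (2 ^ i + 1)) + L' (u * t) ≠
      L ((u * t + u) ^ (2 ^ i + 1)) + L' (u * t + u) ↔
        L (u ^ (2 ^ i + 1) * (t ^ 2 ^ i + t + 1)) ≠ L' u := by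
    have hsum : L ((u * t) ^ (2 ^ i + 1)) + L' (u * t) +
        (L ((u * t + u) ^ (2 ^ i + 1)) + L' (u * t + u)) =
          L (u ^ (2 ^ i + 1) * (t ^ 2 ^ i + t + 1)) + L' u := by
      rw [← CharTwo.mul_pow_two_pow_succ_add_mul_add_pow_two_pow_succ, map_add, map_add]
      linear_combination L' (u * t) * CharTwo.two_eq_zero (R := K)
    rw [ne_eq, ne_eq, ← CharTwo.add_eq_zero, hsum, CharTwo.add_eq_zero]
  rw [injective_iff_forall_apply_mul_ne_apply_mul_add]
  refine forall₂_congr fun u _ ↦ ?_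
  simp only [hne, ← exists_pow_two_pow_add_self_add_one_eq_iff hi, forall_exists_index,
    forall_apply_eq_imp_iff]

end FiniteField

theorem stmt_10_general (m i : ℕ) (hi : Nat.gcd m i = 1)
    (L L' : GaloisField 2 m →ₗ[ZMod 2] GaloisField 2 m) :
    Function.Bijective (fun x : GaloisField 2 m => L (x ^ (2 ^ i + 1)) + L' x) ↔
    ∀ u : GaloisField 2 m, u ≠ 0 → ∀ v : GaloisField 2 m,
      Algebra.trace (ZMod 2) (GaloisField 2 m) v =
        Algebra.trace (ZMod 2) (GaloisField 2 m) 1 →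
      L (u ^ (2 ^ i + 1) * v) ≠ L' u := by
  have hcop : (finrank (ZMod 2) (GaloisField 2 m)).Coprime i := by
    rcases eq_or_ne m 0 with rfl | hm
    · rw [Nat.gcd_zero_left] at hi
      exact hi ▸ Nat.coprime_one_right _
    · rwa [GaloisField.finrank 2 hm]
  rw [← Finite.injective_iff_bijective]
  exact FiniteField.injective_comp_pow_two_pow_succ_add_iff hcop L L'

/-- `F(x) = L(x^{2^i+1}) + L'(x)` with `L, L'` linear and `gcd(m,i) = 1` is a
bijection of `𝔽_{2^m}` iff for every `u ≠ 0` and every `v` with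
`tr(v) = tr(1)` one has `L(u^{2^i+1} v) ≠ L'(u)`. -/
theorem stmt_10 (m i : ℕ) (hm : 0 < m) (hi : Nat.gcd m i = 1)
    (L L' : GaloisField 2 m →ₗ[ZMod 2] GaloisField 2 m) :
    Function.Bijective (fun x : GaloisField 2 m => L (x ^ (2 ^ i + 1)) + L' x) ↔
    ∀ u : GaloisField 2 m, u ≠ 0 → ∀ v : GaloisField 2 m,
      Algebra.trace (ZMod 2) (GaloisField 2 m) v =
        Algebra.trace (ZMod 2) (GaloisField 2 m) 1 →
      L (u ^ (2 ^ i + 1) * v) ≠ L' u :=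
  stmt_10_general m i hi L L'
end

section
/- Let m be even, gcd(i,m)=1, L a linear map on F_{2^m} with adjoint L* (tr(L(x)y)=tr(x L*(y))). Then F(x) = L(x^{2^i+1}) + x is a permutation of F_{2^m} if and only if for every v with L*(v) ≠ 0 there exists u ∈ F_{2^m} with L*(v) = u^{2^i+1} and tr_{m/2}(v/u) ≠ 0, where tr_{m/2} is the relative trace from F_{2^m} to F_4. -/
/-!
By the Walsh criterion, `F` permutes `𝔽_{2^m}` iff `∑ₓ (-1)^{tr(v F(x))}` vanishes for every
`v ≠ 0`, and by adjointness this sum is `S(L*(v), v)` with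
`S(a, v) = ∑ₓ (-1)^{tr(a x^{2^i+1} + v x)}`. Substituting `y = x + d` in `S²` gives
`S² = 2^m ∑_{d ∈ rad} (-1)^{tr(a d^{2^i+1} + v d)}` over the radical of the quadratic form
`tr(a x^{2^i+1})`. Since `gcd(i, m) = 1`, a nonzero radical element `d` forces
`a = d^{-(2^i+1)}`; and if `a = u^{2^i+1}`, the radical is `u⁻¹𝔽₄` because `gcd(2i, m) = 2`.
On `u⁻¹𝔽₄` the quadratic part is `tr(c³) = 0`, so the radical sum is the sum of the
character `c ↦ (-1)^{tr((v/u) c)}` over `𝔽₄`. It vanishes iff `tr_{m/2}(v/u) ≠ 0`, because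
`tr = tr_{m/2} + tr_{m/2}²`.
-/

open Finset Module

theorem pow_pow_gcd_eq_self {M₀ : Type*} [MonoidWithZero M₀] [IsRightCancelMulZero M₀]
    {x : M₀} {p a b : ℕ} (hp : p ≠ 0) (ha : x ^ p ^ a = x) (hb : x ^ p ^ b = x) :
    x ^ p ^ Nat.gcd a b = x := by
  rcases eq_or_ne x 0 with rfl | hx
  · exact zero_pow (pow_ne_zero _ hp)
  have hpos (n : ℕ) : 1 ≤ p ^ n := Nat.one_le_pow _ _ (Nat.pos_of_ne_zero hp)
  have hone (n : ℕ) (hn : x ^ p ^ n = x) : x ^ (p ^ n - 1) = 1 :=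
    mul_right_cancel₀ hx (by rw [← pow_succ, Nat.sub_add_cancel (hpos n), hn, one_mul])
  have hgcd : x ^ (p ^ Nat.gcd a b - 1) = 1 := by
    rw [← Nat.pow_sub_one_gcd_pow_sub_one]
    exact pow_gcd_eq_one.mpr ⟨hone a ha, hone b hb⟩
  rw [← Nat.sub_add_cancel (hpos _), pow_succ, hgcd, one_mul]

theorem pow_add_one_mul_eq_iff {G₀ : Type*} [CommGroupWithZero G₀] {u : G₀} (hu : u ≠ 0)
    (d : G₀) (n : ℕ) :
    u ^ (n + 1) * d = (u ^ (n + 1) * d ^ n) ^ n ↔ u * d = (u * d) ^ (n * n) := by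
  have hl : u ^ (n + 1) * d = u ^ n * (u * d) := by rw [pow_succ, mul_assoc]
  have hr : (u ^ (n + 1) * d ^ n) ^ n = u ^ n * (u * d) ^ (n * n) := by
    rw [mul_pow, mul_pow, ← pow_mul, ← pow_mul, add_one_mul, pow_add]
    rw [mul_comm (u ^ (n * n)), mul_assoc]
  rw [hl, hr, mul_right_inj' (pow_ne_zero n hu)]

theorem pow_two_pow_two_mul_of_pow_four_eq {M : Type*} [Monoid M] {c : M} (hc : c ^ 4 = c)
    (k : ℕ) : c ^ 2 ^ (2 * k) = c := by
  induction k with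
  | zero => simp
  | succ k ih => rw [mul_add_one, pow_add, pow_mul, ih]; norm_num [hc]

theorem Finset.sum_range_two_mul {M : Type*} [AddCommMonoid M] (f : ℕ → M) (n : ℕ) :
    ∑ j ∈ range (2 * n), f j = ∑ k ∈ range n, (f (2 * k) + f (2 * k + 1)) := by
  induction n with
  | zero => simp
  | succ n ih =>
    rw [show 2 * (n + 1) = 2 * n + 1 + 1 by ring, sum_range_succ, sum_range_succ, ih,
      sum_range_succ, add_assoc]

theorem Nat.Coprime.odd_of_even_right {i m : ℕ} (hi : Nat.Coprime i m) (hm : Even m) : Odd i :=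
  Nat.not_even_iff_odd.mp fun h =>
    absurd (hi.gcd_eq_one ▸ Nat.dvd_gcd h.two_dvd hm.two_dvd) (by norm_num)

theorem Nat.Coprime.gcd_two_mul_of_even_right {i m : ℕ} (hi : Nat.Coprime i m) (hm : Even m) :
    Nat.gcd (2 * i) m = 2 := by
  obtain ⟨n, rfl⟩ := hm
  rw [← two_mul] at hi ⊢
  rw [Nat.gcd_mul_left, (hi.coprime_dvd_right (_root_.dvd_mul_left n 2)).gcd_eq_one, mul_one]

namespace AddChar

variable {R R' : Type*} [CommRing R] [Fintype R] [DecidableEq R] [CommRing R'] [IsDomain R']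
  {ψ : AddChar R R'}

theorem bijective_iff_forall_sum_mul_eq_zero [CharZero R'] (hψ : ψ.IsPrimitive) (F : R → R) :
    Function.Bijective F ↔ ∀ v ≠ 0, ∑ x, ψ (v * F x) = 0 := by
  have hsum (b : R) : ∑ v, ψ (v * b) = if b = 0 then (Fintype.card R : R') else 0 := by
    rw [sum_mulShift b hψ, Nat.cast_ite, Nat.cast_zero]
  refine ⟨fun hF v hv => ?_, fun h => Finite.surjective_iff_bijective.mp fun y => ?_⟩
  · rw [Fintype.sum_bijective F hF _ (fun y => ψ (v * y)) fun _ => rfl]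
    simpa [mul_comm, hv] using hsum v
  · by_contra! hy
    have hzero : ∑ x, ∑ v, ψ (v * (F x - y)) = 0 :=
      sum_eq_zero fun x _ => by rw [hsum, if_neg (sub_ne_zero.mpr (hy x))]
    have hcard : ∑ v, ∑ x, ψ (v * (F x - y)) = Fintype.card R := by
      rw [sum_eq_single_of_mem 0 (mem_univ _) fun v _ hv => ?_]
      · simp
      · simp_rw [mul_sub, sub_eq_add_neg, map_add_eq_mul, ← sum_mul, h v hv, zero_mul]
    rw [sum_comm, hcard] at hzero
    exact Fintype.card_ne_zero (Nat.cast_eq_zero.mp hzero)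

theorem sq_sum_eq_card_mul_sum_radical [CharP R 2] (hψ : ψ.IsPrimitive) (f r : R → R)
    (hf : ∀ x d, ψ (f (x + d)) = ψ (f x) * ψ (x * r d) * ψ (f d)) :
    (∑ x, ψ (f x)) ^ 2 = Fintype.card R * ∑ d with r d = 0, ψ (f d) := by
  have hsq (a : R) : ψ a * ψ a = 1 := by
    rw [← map_add_eq_mul, CharTwo.add_self_eq_zero, map_zero_eq_one]
  calc (∑ x, ψ (f x)) ^ 2 = ∑ d : R, ∑ x, ψ (f x) * ψ (f (x + d)) := by
        rw [sum_comm, sq, sum_mul_sum]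
        exact sum_congr rfl fun x _ => (Fintype.sum_equiv (Equiv.addLeft x)
          (fun d => ψ (f x) * ψ (f (x + d))) _ fun d => rfl).symm
    _ = ∑ d, (∑ x, ψ (x * r d)) * ψ (f d) := by
        simp_rw [sum_mul]
        refine sum_congr rfl fun d _ => sum_congr rfl fun x _ => ?_
        rw [hf, ← mul_assoc, ← mul_assoc, hsq, one_mul]
    _ = Fintype.card R * ∑ d with r d = 0, ψ (f d) := by
        simp_rw [sum_mulShift _ hψ, Nat.cast_ite, Nat.cast_zero, ite_mul, zero_mul, mul_sum,
          sum_filter]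

theorem sum_eq_zero_of_sub_closed {A : Type*} [AddCommGroup A] (ψ : AddChar A R') {s : Finset A}
    (hs : ∀ x ∈ s, ∀ y ∈ s, x - y ∈ s) {a : A} (ha : a ∈ s) (hψa : ψ a ≠ 1) :
    ∑ x ∈ s, ψ x = 0 := by
  have hadd : ∀ x ∈ s, a + x ∈ s := fun x hx => by
    have h0 : (0 : A) ∈ s := by simpa using hs a ha a ha
    simpa using hs a ha _ (hs 0 h0 x hx)
  refine eq_zero_of_mul_eq_self_left hψa ?_
  rw [mul_sum]
  exact sum_nbij' (a + ·) (· - a) hadd (fun x hx => hs x hx a ha)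
    (fun x _ => by simp) (fun x _ => by simp) fun x _ => by rw [map_add_eq_mul]

end AddChar

instance charP_two_of_algebra_zmod_two (K : Type*) [Field K] [Algebra (ZMod 2) K] : CharP K 2 :=
  charP_of_injective_algebraMap (algebraMap (ZMod 2) K).injective 2

variable {K : Type*} [Field K] [Algebra (ZMod 2) K]

variable (K) in
noncomputable def traceChar : AddChar K ℤ :=
  (AddChar.zmodChar 2 (by norm_num : (-1 : ℤ) ^ 2 = 1)).compAddMonoidHom
    (Algebra.trace (ZMod 2) K).toAddMonoidHom

theorem traceChar_apply (x : K) :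
    traceChar K x = (-1) ^ (Algebra.trace (ZMod 2) K x).val := rfl

theorem traceChar_eq_one_iff (x : K) : traceChar K x = 1 ↔ Algebra.trace (ZMod 2) K x = 0 := by
  rw [traceChar_apply]
  generalize Algebra.trace (ZMod 2) K x = a
  revert a
  decide

-- The relative trace `tr_{m/2}` onto `𝔽₄ = {c | c ^ 4 = c}`.
variable (K) in
noncomputable def relTrace (x : K) : K :=
  ∑ k ∈ range (finrank (ZMod 2) K / 2), x ^ 2 ^ (2 * k)

theorem relTrace_mul_of_pow_four_eq {c : K} (hc : c ^ 4 = c) (x : K) :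
    relTrace K (c * x) = c * relTrace K x := by
  simp only [relTrace, mul_pow, pow_two_pow_two_mul_of_pow_four_eq hc, mul_sum]

variable [Fintype K]

theorem isPrimitive_traceChar : (traceChar K).IsPrimitive := by
  refine AddChar.IsPrimitive.of_ne_one fun h => ?_
  obtain ⟨x, hx⟩ := Algebra.trace_surjective (ZMod 2) K 1
  have := (traceChar_eq_one_iff x).mp (by rw [h, AddChar.one_apply])
  simp_all

theorem card_eq_two_pow_finrank : Fintype.card K = 2 ^ finrank (ZMod 2) K := by
  rw [card_eq_pow_finrank (K := ZMod 2), ZMod.card]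

theorem pow_two_pow_finrank (x : K) : x ^ 2 ^ finrank (ZMod 2) K = x := by
  rw [← card_eq_two_pow_finrank]
  exact FiniteField.pow_card x

theorem trace_pow_two_pow (x : K) (n : ℕ) :
    Algebra.trace (ZMod 2) K (x ^ 2 ^ n) = Algebra.trace (ZMod 2) K x := by
  have h := Algebra.trace_eq_of_algEquiv (FiniteField.frobeniusAlgEquivOfAlgebraic (ZMod 2) K ^ n) x
  rwa [AlgEquiv.coe_pow, FiniteField.coe_frobeniusAlgEquivOfAlgebraic_iterate, ZMod.card] at h

theorem trace_one_eq_zero (hK : Even (finrank (ZMod 2) K)) : Algebra.trace (ZMod 2) K 1 = 0 := by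
  rw [← map_one (algebraMap (ZMod 2) K), Algebra.trace_algebraMap, nsmul_one]
  exact (ZMod.natCast_eq_zero_iff _ 2).mpr hK.two_dvd

theorem relTrace_pow_four (hK : Even (finrank (ZMod 2) K)) (x : K) :
    relTrace K x ^ 4 = relTrace K x := by
  have hshift := sum_range_succ' (fun k => x ^ 2 ^ (2 * k)) (finrank (ZMod 2) K / 2)
  rw [sum_range_succ, Nat.two_mul_div_two_of_even hK, pow_two_pow_finrank] at hshift
  simp only [mul_zero, pow_zero, pow_one] at hshift
  rw [relTrace, show 4 = 2 ^ 2 by rfl, sum_pow_char_pow, add_right_cancel hshift]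
  simp only [← pow_mul, ← pow_add, mul_add_one]

theorem algebraMap_trace_eq_relTrace_add_sq (hK : Even (finrank (ZMod 2) K)) (x : K) :
    algebraMap (ZMod 2) K (Algebra.trace (ZMod 2) K x) = relTrace K x + relTrace K x ^ 2 := by
  rw [FiniteField.algebraMap_trace_eq_sum_pow, Nat.card_zmod, ← Nat.two_mul_div_two_of_even hK,
    sum_range_two_mul, sum_add_distrib, relTrace, sum_pow_char]
  simp only [pow_succ, pow_mul]

theorem relTrace_ne_zero_iff (hK : Even (finrank (ZMod 2) K)) (w : K) :
    relTrace K w ≠ 0 ↔ ∃ c : K, c ^ 4 = c ∧ Algebra.trace (ZMod 2) K (w * c) ≠ 0 := by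
  have htrace (y : K) := algebraMap_trace_eq_relTrace_add_sq hK y
  constructor
  · intro hw
    -- rescale so that `w * c` has the relative trace of an element of absolute trace `1`
    obtain ⟨b, hb⟩ := Algebra.trace_surjective (ZMod 2) K 1
    set c := relTrace K b / relTrace K w
    have hc : c ^ 4 = c := by rw [div_pow, relTrace_pow_four hK, relTrace_pow_four hK]
    refine ⟨c, hc, fun h => ?_⟩
    have key : algebraMap (ZMod 2) K (Algebra.trace (ZMod 2) K (w * c)) =
        algebraMap (ZMod 2) K (Algebra.trace (ZMod 2) K b) := by
      rw [htrace, htrace, mul_comm, relTrace_mul_of_pow_four_eq hc, div_mul_cancel₀ _ hw]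
    rw [h, hb] at key
    simp at key
  · rintro ⟨c, hc, htr⟩ hw
    apply htr
    apply (algebraMap (ZMod 2) K).injective
    rw [htrace, mul_comm, relTrace_mul_of_pow_four_eq hc, hw]
    simp

theorem sum_traceChar_mul_eq_zero_iff [DecidableEq K] (hK : Even (finrank (ZMod 2) K)) (w : K) :
    ∑ c with c ^ 4 = c, traceChar K (w * c) = 0 ↔ relTrace K w ≠ 0 := by
  rw [relTrace_ne_zero_iff hK]
  constructor
  · contrapose!
    intro h
    rw [sum_congr rfl fun c hc => (traceChar_eq_one_iff _).mpr (h c (mem_filter.mp hc).2),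
      sum_const, nsmul_one, Nat.cast_ne_zero]
    exact card_ne_zero_of_mem (mem_filter.mpr ⟨mem_univ 0, by simp⟩)
  · rintro ⟨c, hc, htr⟩
    refine AddChar.sum_eq_zero_of_sub_closed ((traceChar K).mulShift w) ?_
      (mem_filter.mpr ⟨mem_univ c, hc⟩)
      (by rwa [AddChar.mulShift_apply, Ne, traceChar_eq_one_iff])
    intro x hx y hy
    simp only [mem_filter, mem_univ, true_and] at hx hy ⊢
    rw [show 4 = 2 ^ 2 by rfl] at hx hy ⊢
    rw [sub_pow_char_pow, hx, hy]

section Quadratic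

variable (i : ℕ)

-- `tr (x * polar i a d)` is the polar form of the quadratic form `x ↦ tr (a * x ^ (2 ^ i + 1))`.
noncomputable def polar (a d : K) : K :=
  (iterateFrobeniusEquiv K 2 i).symm (a * d) + a * d ^ 2 ^ i

theorem traceChar_quadratic_add (a v x d : K) :
    traceChar K (a * (x + d) ^ (2 ^ i + 1) + v * (x + d)) =
      traceChar K (a * x ^ (2 ^ i + 1) + v * x) * traceChar K (x * polar i a d) *
        traceChar K (a * d ^ (2 ^ i + 1) + v * d) := by
  have hexpand : a * (x + d) ^ (2 ^ i + 1) + v * (x + d) = (a * x ^ (2 ^ i + 1) + v * x) +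
      (a * d * x ^ 2 ^ i + x * (a * d ^ 2 ^ i)) + (a * d ^ (2 ^ i + 1) + v * d) := by
    rw [pow_succ, add_pow_char_pow, pow_succ, pow_succ]
    ring
  have hcross : traceChar K (a * d * x ^ 2 ^ i) =
      traceChar K (x * (iterateFrobeniusEquiv K 2 i).symm (a * d)) := by
    rw [traceChar_apply, traceChar_apply, ← trace_pow_two_pow (x * _) i, mul_pow,
      ← iterateFrobeniusEquiv_def K 2 i ((iterateFrobeniusEquiv K 2 i).symm _),
      RingEquiv.apply_symm_apply, mul_comm]
  rw [hexpand, polar, mul_add]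
  simp only [AddChar.map_add_eq_mul, hcross]

variable {i}

theorem polar_eq_zero_iff (a d : K) : polar i a d = 0 ↔ a * d = (a * d ^ 2 ^ i) ^ 2 ^ i := by
  rw [polar, CharTwo.add_eq_zero, RingEquiv.symm_apply_eq, iterateFrobeniusEquiv_def]

theorem eq_inv_pow_of_polar_eq_zero (hi : Nat.Coprime i (finrank (ZMod 2) K)) {a d : K}
    (ha : a ≠ 0) (hd : d ≠ 0) (h : polar i a d = 0) : a = d⁻¹ ^ (2 ^ i + 1) := by
  rw [polar_eq_zero_iff] at h
  have ht : (a * d ^ (2 ^ i + 1)) ^ 2 ^ i = a * d ^ (2 ^ i + 1) := by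
    rw [pow_succ, ← mul_assoc, mul_pow, ← h, mul_assoc, ← pow_succ', pow_succ, mul_assoc]
  have ht2 : (a * d ^ (2 ^ i + 1)) ^ 2 = a * d ^ (2 ^ i + 1) := by
    simpa [hi] using pow_pow_gcd_eq_self two_ne_zero ht (pow_two_pow_finrank _)
  have ht1 : a * d ^ (2 ^ i + 1) = 1 := by
    refine mul_left_cancel₀ (mul_ne_zero ha (pow_ne_zero (2 ^ i + 1) hd)) ?_
    rw [mul_one, ← sq, ht2]
  rw [inv_pow]
  exact eq_inv_of_mul_eq_one_left ht1

theorem polar_pow_add_one_eq_zero_iff (hK : Even (finrank (ZMod 2) K))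
    (hi : Nat.Coprime i (finrank (ZMod 2) K)) {u : K} (hu : u ≠ 0) (d : K) :
    polar i (u ^ (2 ^ i + 1)) d = 0 ↔ (u * d) ^ 4 = u * d := by
  rw [polar_eq_zero_iff, pow_add_one_mul_eq_iff hu, ← pow_add, ← two_mul]
  constructor
  · intro h
    simpa [hi.gcd_two_mul_of_even_right hK] using
      pow_pow_gcd_eq_self two_ne_zero h.symm (pow_two_pow_finrank (u * d))
  · intro h
    exact (pow_two_pow_two_mul_of_pow_four_eq h i).symm

theorem trace_pow_two_pow_add_one_eq_zero (hK : Even (finrank (ZMod 2) K)) (hi : Odd i) {c : K}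
    (hc : c ^ 4 = c) : Algebra.trace (ZMod 2) K (c ^ (2 ^ i + 1)) = 0 := by
  obtain ⟨k, rfl⟩ := hi
  rcases eq_or_ne c 0 with rfl | hc0
  · simp
  have hcube : c ^ 3 = 1 := mul_right_cancel₀ hc0 (by rw [← pow_succ, hc, one_mul])
  rw [pow_succ, pow_succ, pow_mul, pow_two_pow_two_mul_of_pow_four_eq hc, ← pow_succ, hcube,
    trace_one_eq_zero hK]

end Quadratic

section Sums

variable [DecidableEq K] {i : ℕ}

variable (i) in
theorem sq_sum_traceChar_quadratic (a v : K) :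
    (∑ x, traceChar K (a * x ^ (2 ^ i + 1) + v * x)) ^ 2 = 2 ^ finrank (ZMod 2) K *
      ∑ d with polar i a d = 0, traceChar K (a * d ^ (2 ^ i + 1) + v * d) := by
  simpa [card_eq_two_pow_finrank] using AddChar.sq_sum_eq_card_mul_sum_radical
    isPrimitive_traceChar _ (polar i a) (traceChar_quadratic_add i a v)

theorem sum_polar_eq_zero_eq_sum_pow_four_eq (hK : Even (finrank (ZMod 2) K))
    (hi : Nat.Coprime i (finrank (ZMod 2) K)) {u : K} (hu : u ≠ 0) (v : K) :
    ∑ d with polar i (u ^ (2 ^ i + 1)) d = 0,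
        traceChar K (u ^ (2 ^ i + 1) * d ^ (2 ^ i + 1) + v * d) =
      ∑ c with c ^ 4 = c, traceChar K (v / u * c) := by
  have hmem (d : K) : d ∈ ({d | polar i (u ^ (2 ^ i + 1)) d = 0} : Finset K) ↔
      u * d ∈ ({c | c ^ 4 = c} : Finset K) := by
    simp only [mem_filter, mem_univ, true_and, polar_pow_add_one_eq_zero_iff hK hi hu]
  refine sum_nbij' (u * ·) (u⁻¹ * ·) (fun d hd => (hmem d).mp hd)
    (fun c hc => (hmem _).mpr (by rwa [mul_inv_cancel_left₀ hu]))
    (fun d _ => inv_mul_cancel_left₀ hu d) (fun c _ => mul_inv_cancel_left₀ hu c) fun d hd => ?_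
  have hd4 : (u * d) ^ 4 = u * d := (mem_filter.mp ((hmem d).mp hd)).2
  rw [← mul_pow, AddChar.map_add_eq_mul, (traceChar_eq_one_iff _).mpr
    (trace_pow_two_pow_add_one_eq_zero hK (hi.odd_of_even_right hK) hd4), one_mul]
  field_simp

theorem sum_traceChar_quadratic_eq_zero_iff (hK : Even (finrank (ZMod 2) K))
    (hi : Nat.Coprime i (finrank (ZMod 2) K)) {a : K} (ha : a ≠ 0) (v : K) :
    ∑ x, traceChar K (a * x ^ (2 ^ i + 1) + v * x) = 0 ↔
      ∃ u, a = u ^ (2 ^ i + 1) ∧ relTrace K (v / u) ≠ 0 := by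
  have hsq := sq_sum_traceChar_quadratic i a v
  constructor
  · intro hS
    rw [hS, zero_pow two_ne_zero, eq_comm, mul_eq_zero] at hsq
    have hrad := hsq.resolve_left (by positivity)
    obtain ⟨d, hd, hd0⟩ : ∃ d, polar i a d = 0 ∧ d ≠ 0 := by
      by_contra! h
      rw [sum_eq_single_of_mem 0 (by simp [polar_eq_zero_iff])
        fun d hd hd0 => absurd (h d (mem_filter.mp hd).2) hd0] at hrad
      simp at hrad
    obtain rfl := eq_inv_pow_of_polar_eq_zero hi ha hd0 hd
    refine ⟨d⁻¹, rfl, ?_⟩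
    rwa [sum_polar_eq_zero_eq_sum_pow_four_eq hK hi (inv_ne_zero hd0),
      sum_traceChar_mul_eq_zero_iff hK] at hrad
  · rintro ⟨u, rfl, hu⟩
    have hu0 : u ≠ 0 := by rintro rfl; simp at ha
    rw [sum_polar_eq_zero_eq_sum_pow_four_eq hK hi hu0, (sum_traceChar_mul_eq_zero_iff hK _).mpr hu,
      mul_zero] at hsq
    exact pow_eq_zero_iff two_ne_zero |>.mp hsq

end Sums

/-- Let `m` be even, `gcd(i,m) = 1`, `L` linear on `𝔽_{2^m}` with adjoint `L*`
(i.e. `tr(L(x)·y) = tr(x·L*(y))`).  Then `F(x) = L(x^{2^i+1}) + x` is a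
permutation iff for every `v` with `L*(v) ≠ 0` there is `u` with
`L*(v) = u^{2^i+1}` and `tr_{m/2}(v/u) ≠ 0`, where `tr_{m/2}` is the relative
trace onto `𝔽₄`. -/
theorem stmt_12 (m i : ℕ) (hm : 0 < m) (hme : Even m) (hi : Nat.gcd i m = 1)
    (L Ls : GaloisField 2 m →ₗ[ZMod 2] GaloisField 2 m)
    (hadj : ∀ x y : GaloisField 2 m,
      Algebra.trace (ZMod 2) (GaloisField 2 m) (L x * y) =
      Algebra.trace (ZMod 2) (GaloisField 2 m) (x * Ls y)) :
    Function.Bijective (fun x : GaloisField 2 m => L (x ^ (2 ^ i + 1)) + x) ↔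
    ∀ v : GaloisField 2 m, Ls v ≠ 0 →
      ∃ u : GaloisField 2 m, Ls v = u ^ (2 ^ i + 1) ∧
        (∑ k ∈ Finset.range (m / 2), (v / u) ^ (2 ^ (2 * k))) ≠ 0 := by
  classical
  let _ : Fintype (GaloisField 2 m) := Fintype.ofFinite _
  have hrank : finrank (ZMod 2) (GaloisField 2 m) = m := GaloisField.finrank 2 hm.ne'
  have hK : Even (finrank (ZMod 2) (GaloisField 2 m)) := by rwa [hrank]
  have hi' : Nat.Coprime i (finrank (ZMod 2) (GaloisField 2 m)) := by rwa [hrank]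
  have hchar (v x : GaloisField 2 m) : traceChar _ (v * (L (x ^ (2 ^ i + 1)) + x)) =
      traceChar _ (Ls v * x ^ (2 ^ i + 1) + v * x) := by
    rw [traceChar_apply, traceChar_apply, mul_add, map_add, map_add, mul_comm v, hadj,
      mul_comm (x ^ _)]
  rw [AddChar.bijective_iff_forall_sum_mul_eq_zero isPrimitive_traceChar]
  simp_rw [hchar]
  refine forall_congr' fun v => ?_
  rcases eq_or_ne (Ls v) 0 with h0 | h0
  · simp only [h0, zero_mul, zero_add, ne_eq, not_true_eq_false, IsEmpty.forall_iff, iff_true]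
    intro hv
    simpa [mul_comm, hv] using AddChar.sum_mulShift v isPrimitive_traceChar
  · have hv : v ≠ 0 := by rintro rfl; simp at h0
    rw [sum_traceChar_quadratic_eq_zero_iff hK hi' h0]
    simp only [relTrace, hrank]
    tauto
end

section
/- Let m be odd, gcd(i,m)=1, and F(x)=x^{2^i+1} on F_{2^m}. Then for every a ≠ 0, the set H_a = {F(x+a)+F(x) : x ∈ F_{2^m}} equals {y ∈ F_{2^m} : tr(a^{-(2^i+1)} y) = 1}, the complement of a linear hyperplane. If instead m is even, H_a = {y : tr(a^{-(2^i+1)} y) = 0}. -/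
/-!
Write `σ` for the `|K|`-power Frobenius of `L/K` and `Q = |K|^i`. Since
`F(ua + a) - F(ua) = a^(Q+1) (u^Q + u + 1)`, in characteristic two `y ∈ H_a` iff
`a^(-(Q+1)) y + 1` lies in the image of the `K`-linear map `σ^i - 1 : u ↦ u^Q - u`.
As `gcd(i, [L:K]) = 1`, `σ^i` generates `Gal(L/K)`, so the kernel of `σ^i - 1` is `K` and by
rank–nullity its image is the whole kernel of the trace, which contains it by Galois invariance.
Finally `tr(1) = [L:K]`.
-/

open Module FiniteField

theorem mul_add_self_pow_expChar_pow_add_one_sub {R : Type*} [CommRing R] (p : ℕ) [ExpChar R p]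
    (k : ℕ) (a u : R) :
    (u * a + a) ^ (p ^ k + 1) - (u * a) ^ (p ^ k + 1) = a ^ (p ^ k + 1) * (u ^ p ^ k + u + 1) := by
  rw [pow_succ, pow_succ, add_pow_expChar_pow, mul_pow]
  ring

section FrobeniusPower

variable {K L : Type*} [Field K] [Fintype K] [Field L] [Finite L] [Algebra K L]

lemma FiniteField.frobeniusAlgEquivOfAlgebraic_pow_apply (i : ℕ) (x : L) :
    (frobeniusAlgEquivOfAlgebraic K L ^ i) x = x ^ Fintype.card K ^ i := by
  rw [AlgEquiv.coe_pow, coe_frobeniusAlgEquivOfAlgebraic_iterate]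

lemma FiniteField.frobeniusAlgEquivOfAlgebraic_pow_apply_eq_self_iff {i : ℕ}
    (hi : i.Coprime (finrank K L)) {x : L} :
    (frobeniusAlgEquivOfAlgebraic K L ^ i) x = x ↔ x ∈ Set.range (algebraMap K L) := by
  set σ := frobeniusAlgEquivOfAlgebraic K L
  rw [IsGalois.mem_range_algebraMap_iff_fixed]
  constructor
  · intro hx τ
    have hσn : Function.IsPeriodicPt σ (finrank K L) x := by
      rw [Function.IsPeriodicPt, Function.IsFixedPt, ← AlgEquiv.coe_pow,
        ← orderOf_frobeniusAlgEquivOfAlgebraic, pow_orderOf_eq_one, AlgEquiv.one_apply]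
    have hσi : Function.IsPeriodicPt σ i x := by
      rwa [Function.IsPeriodicPt, Function.IsFixedPt, ← AlgEquiv.coe_pow]
    have hσ : σ x = x := by
      simpa [hi.gcd_eq_one, Function.IsPeriodicPt, Function.IsFixedPt] using hσi.gcd hσn
    obtain ⟨k, rfl⟩ := (bijective_frobeniusAlgEquivOfAlgebraic_pow K L).2 τ
    simp only [AlgEquiv.coe_pow]
    exact Function.iterate_fixed hσ k
  · exact fun hx => hx _

lemma FiniteField.range_frobeniusAlgEquivOfAlgebraic_pow_sub_one {i : ℕ}
    (hi : i.Coprime (finrank K L)) :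
    LinearMap.range ((frobeniusAlgEquivOfAlgebraic K L ^ i).toLinearMap - LinearMap.id) =
      LinearMap.ker (Algebra.trace K L) := by
  set f := (frobeniusAlgEquivOfAlgebraic K L ^ i).toLinearMap - LinearMap.id
  have h_le : LinearMap.range f ≤ LinearMap.ker (Algebra.trace K L) := by
    rintro _ ⟨u, rfl⟩
    simp only [f, LinearMap.sub_apply, AlgEquiv.toLinearMap_apply, LinearMap.id_apply, map_sub,
      Algebra.trace_eq_of_algEquiv, sub_self, LinearMap.mem_ker]
  have h_ker : finrank K (LinearMap.ker f) ≤ 1 := by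
    refine (Submodule.finrank_mono fun x hx => ?_).trans (finrank_span_le_card {(1 : L)})
    obtain ⟨c, rfl⟩ := (frobeniusAlgEquivOfAlgebraic_pow_apply_eq_self_iff hi).1
      (sub_eq_zero.1 (LinearMap.mem_ker.1 hx))
    exact Submodule.mem_span_singleton.2 ⟨c, (Algebra.algebraMap_eq_smul_one c).symm⟩
  have h_f := LinearMap.finrank_range_add_finrank_ker f
  have h_trace := LinearMap.finrank_range_add_finrank_ker (Algebra.trace K L)
  rw [LinearMap.range_eq_top.2 (Algebra.trace_surjective K L), finrank_top, finrank_self] at h_trace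
  exact Submodule.eq_of_le_of_finrank_le h_le (by omega)

theorem FiniteField.exists_pow_card_pow_sub_self_eq_iff_trace_eq_zero {i : ℕ}
    (hi : i.Coprime (finrank K L)) (z : L) :
    (∃ u : L, u ^ Fintype.card K ^ i - u = z) ↔ Algebra.trace K L z = 0 := by
  rw [← LinearMap.mem_ker, ← range_frobeniusAlgEquivOfAlgebraic_pow_sub_one hi]
  simp [frobeniusAlgEquivOfAlgebraic_pow_apply]

theorem FiniteField.exists_add_pow_add_pow_eq_iff_trace_eq_finrank [CharP K 2] {i : ℕ}
    (hi : i.Coprime (finrank K L)) {a : L} (ha : a ≠ 0) (y : L) :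
    (∃ x : L, (x + a) ^ (Fintype.card K ^ i + 1) + x ^ (Fintype.card K ^ i + 1) = y) ↔
      Algebra.trace K L (a⁻¹ ^ (Fintype.card K ^ i + 1) * y) = finrank K L := by
  have : CharP L 2 := charP_of_injective_algebraMap' K 2
  obtain ⟨n, -, hn⟩ := FiniteField.card K 2
  set q := Fintype.card K ^ i
  have hq : q = 2 ^ (n * i) := by rw [pow_mul, ← hn]
  have htr : Algebra.trace K L 1 = finrank K L := by
    simpa using Algebra.trace_algebraMap (S := L) (1 : K)
  calc (∃ x : L, (x + a) ^ (q + 1) + x ^ (q + 1) = y)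
      ↔ ∃ u : L, a ^ (q + 1) * (u ^ q + u + 1) = y := by
        rw [(mul_right_surjective₀ ha).exists, hq]
        simp only [← mul_add_self_pow_expChar_pow_add_one_sub 2, CharTwo.sub_eq_add]
    _ ↔ ∃ u : L, u ^ q - u = (a ^ (q + 1))⁻¹ * y + 1 := by
        refine exists_congr fun u => ?_
        rw [← eq_inv_mul_iff_mul_eq₀ (pow_ne_zero _ ha), CharTwo.sub_eq_add,
          CharTwo.add_eq_iff_eq_add]
    _ ↔ Algebra.trace K L (a⁻¹ ^ (q + 1) * y) = finrank K L := by
        rw [exists_pow_card_pow_sub_self_eq_iff_trace_eq_zero hi, map_add, htr, inv_pow,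
          CharTwo.add_eq_iff_eq_add, zero_add]

end FrobeniusPower

/-- For `F(x) = x^{2^i+1}` with `gcd(i,m) = 1` and `a ≠ 0`, the set
`H_a = {F(x+a) + F(x) : x}` is `{y : tr(a^{-(2^i+1)} y) = 1}` when `m` is odd,
and `{y : tr(a^{-(2^i+1)} y) = 0}` when `m` is even. -/
theorem stmt_13 (m i : ℕ) (hm : 0 < m) (hi : Nat.gcd i m = 1)
    (a : GaloisField 2 m) (ha : a ≠ 0) :
    (Odd m →
      {y : GaloisField 2 m | ∃ x : GaloisField 2 m,
          (x + a) ^ (2 ^ i + 1) + x ^ (2 ^ i + 1) = y} =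
        {y : GaloisField 2 m |
          Algebra.trace (ZMod 2) (GaloisField 2 m) (a⁻¹ ^ (2 ^ i + 1) * y) = 1}) ∧
    (Even m →
      {y : GaloisField 2 m | ∃ x : GaloisField 2 m,
          (x + a) ^ (2 ^ i + 1) + x ^ (2 ^ i + 1) = y} =
        {y : GaloisField 2 m |
          Algebra.trace (ZMod 2) (GaloisField 2 m) (a⁻¹ ^ (2 ^ i + 1) * y) = 0}) := by
  have hfinrank : finrank (ZMod 2) (GaloisField 2 m) = m := GaloisField.finrank 2 hm.ne'
  have key (y : GaloisField 2 m) :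
      (∃ x : GaloisField 2 m, (x + a) ^ (2 ^ i + 1) + x ^ (2 ^ i + 1) = y) ↔
        Algebra.trace (ZMod 2) (GaloisField 2 m) (a⁻¹ ^ (2 ^ i + 1) * y) = m := by
    simpa only [ZMod.card, hfinrank] using
      exists_add_pow_add_pow_eq_iff_trace_eq_finrank (K := ZMod 2) (by rwa [hfinrank]) ha y
  exact ⟨fun hodd => Set.ext fun y => ZMod.natCast_eq_one_iff_odd.2 hodd ▸ key y,
    fun heven => Set.ext fun y => ZMod.natCast_eq_zero_iff_even.2 heven ▸ key y⟩
end

section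
/- Let m be odd, gcd(i,m)=1, a ∈ F_{2^m}^*. The map L(x,y) = (x + a·tr(x/a) + a·tr(a^{-(2^i+1)}y), y + a^{2^i+1}·tr(a^{-(2^i+1)}y) + a^{2^i+1}·tr(x/a)) on F_{2^m}^2 is a linear involution (hence a permutation). -/
/-!
With `e = 2^i + 1` and `w = (a, a^e)`, the map is the transvection `p ↦ p + s(p) • w` of the
linear form `s(x, y) = tr(x/a) + tr(a^{-e} y)`. Since `s(w) = tr 1 + tr 1 = 0`, applying it twice
gives `p + 2 s(p) • w = p` in characteristic two.
-/

open Module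

theorem LinearMap.transvection_involutive {R V : Type*} [Semiring R] [AddCommMonoid V]
    [Module R V] {f : Dual R V} {v : V} (hfv : f v = 0) (hv : v + v = 0) :
    Function.Involutive (transvection f v) := fun x => by
  rw [transvection.comp_of_left_eq_apply hfv, hv, transvection.of_right_eq_zero, id_apply]

section WeightedForm

variable {F K : Type*} [CommRing F] [Field K] [Algebra F K]

def weightedForm (t : K →ₗ[F] F) (α β : K) : Dual F (K × K) :=
  (t ∘ₗ LinearMap.mulLeft F α⁻¹).coprod (t ∘ₗ LinearMap.mulLeft F β⁻¹)

theorem weightedForm_apply (t : K →ₗ[F] F) (α β : K) (p : K × K) :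
    weightedForm t α β p = t (α⁻¹ * p.1) + t (β⁻¹ * p.2) :=
  rfl

theorem weightedForm_apply_self [CharP K 2] (t : K →ₗ[F] F) {α β : K} (hα : α ≠ 0)
    (hβ : β ≠ 0) : weightedForm t α β (α, β) = 0 := by
  rw [weightedForm_apply, inv_mul_cancel₀ hα, inv_mul_cancel₀ hβ, ← map_add,
    CharTwo.add_self_eq_zero, map_zero]

theorem transvection_weightedForm_apply (t : K →ₗ[F] F) (α β : K) (p : K × K) :
    LinearMap.transvection (weightedForm t α β) (α, β) p =
      (p.1 + α * algebraMap F K (t (α⁻¹ * p.1)) + α * algebraMap F K (t (β⁻¹ * p.2)),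
       p.2 + β * algebraMap F K (t (β⁻¹ * p.2)) + β * algebraMap F K (t (α⁻¹ * p.1))) := by
  rw [LinearMap.transvection.apply, weightedForm_apply]
  ext <;> simp only [Prod.fst_add, Prod.snd_add, Prod.smul_fst, Prod.smul_snd] <;>
    simp only [Algebra.smul_def, map_add] <;> ring

end WeightedForm

theorem stmt_14_general (m i : ℕ)
    (a : GaloisField 2 m) (ha : a ≠ 0) :
    IsLinearMap (ZMod 2)
      (fun p : GaloisField 2 m × GaloisField 2 m =>
        (p.1 + a * algebraMap (ZMod 2) (GaloisField 2 m)
            (Algebra.trace (ZMod 2) (GaloisField 2 m) (p.1 / a)) +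
          a * algebraMap (ZMod 2) (GaloisField 2 m)
            (Algebra.trace (ZMod 2) (GaloisField 2 m) (a⁻¹ ^ (2 ^ i + 1) * p.2)),
         p.2 + a ^ (2 ^ i + 1) * algebraMap (ZMod 2) (GaloisField 2 m)
            (Algebra.trace (ZMod 2) (GaloisField 2 m) (a⁻¹ ^ (2 ^ i + 1) * p.2)) +
          a ^ (2 ^ i + 1) * algebraMap (ZMod 2) (GaloisField 2 m)
            (Algebra.trace (ZMod 2) (GaloisField 2 m) (p.1 / a)))) ∧
    ∀ p : GaloisField 2 m × GaloisField 2 m,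
      (fun p : GaloisField 2 m × GaloisField 2 m =>
        (p.1 + a * algebraMap (ZMod 2) (GaloisField 2 m)
            (Algebra.trace (ZMod 2) (GaloisField 2 m) (p.1 / a)) +
          a * algebraMap (ZMod 2) (GaloisField 2 m)
            (Algebra.trace (ZMod 2) (GaloisField 2 m) (a⁻¹ ^ (2 ^ i + 1) * p.2)),
         p.2 + a ^ (2 ^ i + 1) * algebraMap (ZMod 2) (GaloisField 2 m)
            (Algebra.trace (ZMod 2) (GaloisField 2 m) (a⁻¹ ^ (2 ^ i + 1) * p.2)) +
          a ^ (2 ^ i + 1) * algebraMap (ZMod 2) (GaloisField 2 m)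
            (Algebra.trace (ZMod 2) (GaloisField 2 m) (p.1 / a))))^[2] p = p := by
  set 𝓛 := LinearMap.transvection
    (weightedForm (Algebra.trace (ZMod 2) (GaloisField 2 m)) a (a ^ (2 ^ i + 1)))
    (a, a ^ (2 ^ i + 1))
  have h𝓛 : ∀ p, 𝓛 p = _ := transvection_weightedForm_apply _ a (a ^ (2 ^ i + 1))
  simp only [div_eq_inv_mul, inv_pow, ← h𝓛]
  have hw : (a, a ^ (2 ^ i + 1)) + (a, a ^ (2 ^ i + 1)) = 0 := CharTwo.add_self_eq_zero _
  exact ⟨𝓛.isLinear, fun p => LinearMap.transvection_involutive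
    (weightedForm_apply_self _ ha (pow_ne_zero _ ha)) hw p⟩

/-- For `m` odd, `gcd(i,m) = 1` and `a ≠ 0`, the map
`𝓛(x,y) = (x + a·tr(x/a) + a·tr(a^{-(2^i+1)} y),
           y + a^{2^i+1}·tr(a^{-(2^i+1)} y) + a^{2^i+1}·tr(x/a))`
on `𝔽_{2^m}²` is a linear involution (hence a permutation). -/
theorem stmt_14 (m i : ℕ) (hm : Odd m) (hi : Nat.gcd i m = 1)
    (a : GaloisField 2 m) (ha : a ≠ 0) :
    IsLinearMap (ZMod 2)
      (fun p : GaloisField 2 m × GaloisField 2 m =>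
        (p.1 + a * algebraMap (ZMod 2) (GaloisField 2 m)
            (Algebra.trace (ZMod 2) (GaloisField 2 m) (p.1 / a)) +
          a * algebraMap (ZMod 2) (GaloisField 2 m)
            (Algebra.trace (ZMod 2) (GaloisField 2 m) (a⁻¹ ^ (2 ^ i + 1) * p.2)),
         p.2 + a ^ (2 ^ i + 1) * algebraMap (ZMod 2) (GaloisField 2 m)
            (Algebra.trace (ZMod 2) (GaloisField 2 m) (a⁻¹ ^ (2 ^ i + 1) * p.2)) +
          a ^ (2 ^ i + 1) * algebraMap (ZMod 2) (GaloisField 2 m)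
            (Algebra.trace (ZMod 2) (GaloisField 2 m) (p.1 / a)))) ∧
    ∀ p : GaloisField 2 m × GaloisField 2 m,
      (fun p : GaloisField 2 m × GaloisField 2 m =>
        (p.1 + a * algebraMap (ZMod 2) (GaloisField 2 m)
            (Algebra.trace (ZMod 2) (GaloisField 2 m) (p.1 / a)) +
          a * algebraMap (ZMod 2) (GaloisField 2 m)
            (Algebra.trace (ZMod 2) (GaloisField 2 m) (a⁻¹ ^ (2 ^ i + 1) * p.2)),
         p.2 + a ^ (2 ^ i + 1) * algebraMap (ZMod 2) (GaloisField 2 m)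
            (Algebra.trace (ZMod 2) (GaloisField 2 m) (a⁻¹ ^ (2 ^ i + 1) * p.2)) +
          a ^ (2 ^ i + 1) * algebraMap (ZMod 2) (GaloisField 2 m)
            (Algebra.trace (ZMod 2) (GaloisField 2 m) (p.1 / a))))^[2] p = p :=
  stmt_14_general m i a ha
end

section
/- Let m be odd, gcd(i,m)=1, a ∈ F_{2^m}^*. The map F_1(x) = x + a·tr(x/a) + a·tr((x/a)^{2^i+1}) is an involution of F_{2^m} (hence a bijection). -/
private lemma tr_frob (m : ℕ) (y : GaloisField 2 m) :
    Algebra.trace (ZMod 2) (GaloisField 2 m) (y ^ 2) =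
      Algebra.trace (ZMod 2) (GaloisField 2 m) y := by
  let σ : GaloisField 2 m ≃ₐ[ZMod 2] GaloisField 2 m :=
    AlgEquiv.ofRingEquiv (f := frobeniusEquiv (GaloisField 2 m) 2)
      (fun c => by
        simp only [frobeniusEquiv_def, ← map_pow, ZMod.pow_card])
  exact Algebra.trace_eq_of_algEquiv σ y

private lemma tr_frob_pow (m i : ℕ) (y : GaloisField 2 m) :
    Algebra.trace (ZMod 2) (GaloisField 2 m) (y ^ 2 ^ i) =
      Algebra.trace (ZMod 2) (GaloisField 2 m) y := by
  induction i with
  | zero => simp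
  | succ k ih =>
      have : y ^ 2 ^ (k + 1) = (y ^ 2 ^ k) ^ 2 := by
        rw [← pow_mul, pow_succ]
      rw [this, tr_frob, ih]

private lemma idem_pow {F : Type*} [CommRing F] (e : F) (he2 : e * e = e)
    (n : ℕ) : e ^ 2 ^ n = e := by
  induction n with
  | zero => simp
  | succ k ih =>
      have : e ^ 2 ^ (k + 1) = (e ^ 2 ^ k) ^ 2 := by rw [← pow_mul, pow_succ]
      rw [this, ih, sq, he2]

private lemma nat_odd_cast (m : ℕ) (hm : Odd m) : ((m : ZMod 2)) = 1 := by
  obtain ⟨k, rfl⟩ := hm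
  push_cast
  have h2 : (2 : ZMod 2) = 0 := by decide
  rw [h2]; ring

private lemma tr_smul (m : ℕ) (c : ZMod 2) (y : GaloisField 2 m) :
    Algebra.trace (ZMod 2) (GaloisField 2 m)
      (algebraMap (ZMod 2) (GaloisField 2 m) c * y) =
      c * Algebra.trace (ZMod 2) (GaloisField 2 m) y := by
  rw [← Algebra.smul_def, map_smul, smul_eq_mul]

/-- For `m` odd, `gcd(i,m) = 1`, `a ≠ 0`, the map
`F₁(x) = x + a·tr(x/a) + a·tr((x/a)^{2^i+1})` is an involution of `𝔽_{2^m}`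
(hence a bijection). -/
theorem stmt_15 (m i : ℕ) (hm : Odd m) (hi : Nat.gcd i m = 1)
    (a : GaloisField 2 m) (ha : a ≠ 0) :
    (∀ x : GaloisField 2 m,
      (fun x : GaloisField 2 m =>
        x + a * algebraMap (ZMod 2) (GaloisField 2 m)
              (Algebra.trace (ZMod 2) (GaloisField 2 m) (x / a)) +
          a * algebraMap (ZMod 2) (GaloisField 2 m)
              (Algebra.trace (ZMod 2) (GaloisField 2 m) ((x / a) ^ (2 ^ i + 1))))^[2] x
        = x) ∧
    Function.Bijective (fun x : GaloisField 2 m =>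
      x + a * algebraMap (ZMod 2) (GaloisField 2 m)
            (Algebra.trace (ZMod 2) (GaloisField 2 m) (x / a)) +
        a * algebraMap (ZMod 2) (GaloisField 2 m)
            (Algebra.trace (ZMod 2) (GaloisField 2 m) ((x / a) ^ (2 ^ i + 1)))) := by
  set tr := Algebra.trace (ZMod 2) (GaloisField 2 m) with htrdef
  set φ := algebraMap (ZMod 2) (GaloisField 2 m) with hφdef
  set f : GaloisField 2 m → GaloisField 2 m := fun x =>
    x + a * φ (tr (x / a)) + a * φ (tr ((x / a) ^ (2 ^ i + 1))) with hfdef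
  have hm0 : m ≠ 0 := by rintro rfl; simp [Nat.odd_iff] at hm
  have hdd : ∀ d : ZMod 2, d + d = 0 := by decide
  have hdsq : ∀ d : ZMod 2, d * d = d := by decide
  have htrmap : ∀ c : ZMod 2, tr (φ c) = c := by
    intro c
    rw [htrdef, hφdef, Algebra.trace_algebraMap, GaloisField.finrank 2 hm0,
      nsmul_eq_mul, nat_odd_cast m hm, one_mul]
  have hinv : ∀ x, f (f x) = x := by
    intro x
    set y := x / a with hy
    set T := tr y with hT
    set S := tr (y ^ (2 ^ i + 1)) with hS
    set c := T + S with hc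
    set e := φ c with he
    have hfx : f x = x + a * e := by
      simp only [hfdef, ← hy, ← hT, ← hS, he, hc, map_add]
      ring
    have hdiv : f x / a = y + e := by
      rw [hfx, add_div, mul_div_cancel_left₀ _ ha, hy]
    have he2 : e * e = e := by rw [he, ← map_mul, hdsq]
    have hepow : e ^ 2 ^ i = e := idem_pow e he2 i
    have htre : tr e = c := htrmap c
    have hT' : tr (f x / a) = T + c := by
      rw [hdiv, map_add, ← hT, htre]
    have hexp : (y + e) ^ (2 ^ i + 1) =
        y ^ (2 ^ i + 1) + e * y ^ 2 ^ i + e * y + e := by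
      rw [pow_succ]
      have hfr : (y + e) ^ 2 ^ i = y ^ 2 ^ i + e ^ 2 ^ i :=
        add_pow_char_pow y e 2 i
      rw [hfr, hepow]
      have hys : y ^ 2 ^ i * y = y ^ (2 ^ i + 1) := by rw [pow_succ]
      linear_combination he2 + hys
    have hS' : tr ((f x / a) ^ (2 ^ i + 1)) = S + c := by
      rw [hdiv, hexp, map_add, map_add, map_add, ← hS]
      have h1 : tr (e * y ^ 2 ^ i) = c * T := by
        rw [he, htrdef, tr_smul, ← htrdef, tr_frob_pow, ← hT]
      have h2 : tr (e * y) = c * T := by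
        rw [he, htrdef, tr_smul, ← htrdef, ← hT]
      rw [h1, h2, htre]
      have h0 : c * T + c * T = 0 := hdd _
      linear_combination h0
    have hffx : f (f x) = f x + a * φ (tr (f x / a)) +
        a * φ (tr ((f x / a) ^ (2 ^ i + 1))) := rfl
    rw [hffx, hT', hS', hfx]
    have hsum : φ (T + c) + φ (S + c) = e := by
      rw [← map_add, he]
      congr 1
      have h0 : c + c = 0 := hdd c
      linear_combination h0
    have hchar : a * e + a * e = 0 := by
      have h2 : (2 : GaloisField 2 m) = 0 := CharP.cast_eq_zero (GaloisField 2 m) 2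
      linear_combination (a * e) * h2
    linear_combination a * hsum + hchar
  have hinvol : Function.Involutive f := hinv
  exact ⟨fun x => hinv x, hinvol.bijective⟩
end

section
/- For m ≥ 4 even and gcd(i,m)=1, the function F'(x) = x^{2^i+1} + (x^{2^i}+x+1)·tr(x^{2^i+1}) on F_{2^m} is APN (for every a≠0 and b, the equation F'(x+a)+F'(x)=b has at most 2 solutions), and F' is EA-inequivalent to every power function. -/
/-- The absolute trace of `𝔽_{2^m}` over `𝔽₂`. -/
noncomputable def tr (m : ℕ) (x : GaloisField 2 m) : ZMod 2 :=
  Algebra.trace (ZMod 2) (GaloisField 2 m) x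

/-- The function `F'(x) = x^{2^i+1} + (x^{2^i} + x + 1)·tr(x^{2^i+1})`. -/
noncomputable def Fapn (m i : ℕ) (x : GaloisField 2 m) : GaloisField 2 m :=
  x ^ (2 ^ i + 1) + (x ^ (2 ^ i) + x + 1) *
    algebraMap (ZMod 2) (GaloisField 2 m) (tr m (x ^ (2 ^ i + 1)))

/-!
`F' = G ∘ F₁`, where `G(x) = x^{2^i+1}` is the Gold function and `F₁(x) = x + tr(x^{2^i+1})`;
as `m` is even, `tr 1 = 0`, which makes `F₁` an involution. Taking traces in
`F'(x+a) + F'(x) = b` gives `F₁(x+a) = F₁(x) + a + tr b`, so `F₁` maps the solutions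
injectively to the solutions of a Gold equation `G(X+a') + G(X) = b`; there are at most two of these, because
`X ↦ X^{2^i}` fixes only `𝔽₂` when `gcd(i, m) = 1`.

For the inequivalence, call `f` affine if `f(x+y) + f(0) = f(x) + f(y)`. The derivative
`F'(x+1) + F'(x) = x^{2^i} + x + 1` is affine. An EA-equivalence turns this into an affine
derivative of `y ↦ y^d` in the direction `A₂ 1 ≠ 0`; by homogeneity every derivative of
`y ↦ y^d` is then affine, hence so is every derivative of `F'`. But for a primitive cube root of
unity `ω`, the derivative of `F'` in direction `ω` is that of `G` plus `tr(x^{2^i+1})`, a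
quadratic form with nonzero polar form `tr(x^{2^i} y + x y^{2^i})`, so it is not affine.
-/

open Function

section Affine

variable {G G' H H' : Type*} [AddCommGroup G] [AddCommGroup G'] [AddCommGroup H] [AddCommGroup H']

def dirDeriv (a : G) (f : G → H) (x : G) : H := f (x + a) - f x

def IsAffine (f : G → H) : Prop := ∀ x y, f (x + y) + f 0 = f x + f y

theorem dirDeriv_zero (f : G → H) : dirDeriv 0 f = fun _ => 0 := by
  funext x; simp [dirDeriv]

theorem isAffine_const (c : H) : IsAffine (fun _ : G => c) := fun _ _ => rfl

theorem IsAffine.comp_add_right {f : G → H} (hf : IsAffine f) (c : G) :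
    IsAffine (fun x => f (x + c)) := by
  intro x y
  have := hf (x + y) c
  have := hf x y
  have := hf x c
  have := hf y c
  grind

theorem isAffine_comp_add_right_iff {f : G → H} (c : G) :
    IsAffine (fun x => f (x + c)) ↔ IsAffine f := by
  refine ⟨fun h => ?_, fun h => h.comp_add_right c⟩
  simpa using h.comp_add_right (-c)

theorem isAffine_add_iff_left {f g : G → H} (hg : IsAffine g) :
    IsAffine (fun x => f x + g x) ↔ IsAffine f := by
  refine forall₂_congr fun x y => ?_
  have := hg x y
  constructor <;> intro h <;> grind

theorem isAffine_comp_iff_of_injective {f : G → H} (A : H →+ H') (hA : Injective A) :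
    IsAffine (fun x => A (f x)) ↔ IsAffine f := by
  refine forall₂_congr fun x y => ?_
  rw [← map_add, ← map_add, hA.eq_iff]

theorem isAffine_comp_iff_of_surjective {f : G' → H} (A : G →+ G') (hA : Surjective A) :
    IsAffine (fun x => f (A x)) ↔ IsAffine f := by
  simp only [IsAffine, map_add, map_zero]
  exact (hA.forall₂ (p := fun y₁ y₂ => f (y₁ + y₂) + f 0 = f y₁ + f y₂)).symm

theorem isAffine_dirDeriv_iff_of_eq_affine_comp {F : G → H} {g : G' → H'} (A₁ : H' ≃+ H)
    (A₂ : G ≃+ G') (A : G →+ H) (c₁ : H) (c₂ : G') (c₀ : H)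
    (hF : ∀ x, F x = A₁ (g (A₂ x + c₂)) + c₁ + A x + c₀) (a : G) :
    IsAffine (dirDeriv a F) ↔ IsAffine (dirDeriv (A₂ a) g) := by
  have hD : dirDeriv a F = fun x => A₁ (dirDeriv (A₂ a) g (A₂ x + c₂)) + A a := by
    funext x
    simp only [dirDeriv, hF, map_add, map_sub, add_right_comm _ c₂]
    abel
  rw [hD, isAffine_add_iff_left (isAffine_const _)]
  exact (isAffine_comp_iff_of_injective A₁.toAddMonoidHom A₁.injective).trans <|
    (isAffine_comp_iff_of_surjective A₂.toAddMonoidHom A₂.surjective).trans <|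
      isAffine_comp_add_right_iff c₂

end Affine

section PowerMap

variable {K : Type*} [Field K]

theorem dirDeriv_pow_mul (d : ℕ) (a : K) {t : K} (ht : t ≠ 0) (x : K) :
    dirDeriv (t * a) (· ^ d) x = t ^ d * dirDeriv a (· ^ d) (t⁻¹ * x) := by
  simp only [dirDeriv, mul_sub, ← mul_pow, mul_add, mul_inv_cancel_left₀ ht]

theorem IsAffine.dirDeriv_pow {d : ℕ} {a : K} (ha : a ≠ 0)
    (h : IsAffine (dirDeriv a (· ^ d))) (b : K) : IsAffine (dirDeriv b (· ^ d)) := by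
  rcases eq_or_ne b 0 with rfl | hb
  · rw [dirDeriv_zero]; exact isAffine_const 0
  have ht : b / a ≠ 0 := div_ne_zero hb ha
  rw [← div_mul_cancel₀ b ha, funext (dirDeriv_pow_mul d a ht)]
  exact (isAffine_comp_iff_of_injective (AddMonoidHom.mulLeft ((b / a) ^ d))
    (mul_right_injective₀ (pow_ne_zero d ht))).2 <|
      (isAffine_comp_iff_of_surjective (AddMonoidHom.mulLeft (b / a)⁻¹)
        (mul_left_surjective₀ (inv_ne_zero ht))).2 h

end PowerMap

theorem pow_pow_eq_self_iff_isPeriodicPt {M : Type*} [Monoid M] {x : M} {p k : ℕ} :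
    x ^ p ^ k = x ↔ IsPeriodicPt (· ^ p) k x := by
  rw [IsPeriodicPt, IsFixedPt, pow_iterate]

theorem card_subtype_le_two {α : Type*} {p : α → Prop} (f : α → α)
    (h : ∀ x y, p x → p y → y = x ∨ y = f x) : Nat.card {x // p x} ≤ 2 := by
  rcases isEmpty_or_nonempty {x // p x} with hp | ⟨x, hx⟩
  · simp
  calc Nat.card {x // p x} = {y | p y}.ncard := rfl
    _ ≤ ({x, f x} : Set α).ncard := Set.ncard_le_ncard fun y hy => h x y hx hy
    _ ≤ 2 := (Set.ncard_insert_le _ _).trans (by rw [Set.ncard_singleton])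

section CharTwo

variable {R : Type*} [CommRing R] [CharP R 2]

theorem add_pow_two_pow_add_one (x a : R) (i : ℕ) :
    (x + a) ^ (2 ^ i + 1) =
      x ^ (2 ^ i + 1) + (a * x ^ 2 ^ i + a ^ 2 ^ i * x + a ^ (2 ^ i + 1)) := by
  rw [pow_succ, pow_succ, pow_succ, add_pow_char_pow]
  ring

theorem isAffine_dirDeriv_pow_two_pow_add_one (i : ℕ) (a : R) :
    IsAffine (dirDeriv a (· ^ (2 ^ i + 1))) := by
  intro x y
  simp only [dirDeriv, add_pow_two_pow_add_one, add_pow_char_pow,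
    zero_pow (pow_ne_zero i two_ne_zero)]
  grind

theorem pow_two_pow_of_sq_eq_add_one {R : Type*} [CommRing R] [CharP R 2] {ω : R}
    (hω : ω ^ 2 = ω + 1) {k : ℕ} (hk : Odd k) : ω ^ 2 ^ k = ω + 1 := by
  have hper : IsPeriodicPt (· ^ 2) 2 ω := by
    rw [← pow_pow_eq_self_iff_isPeriodicPt, pow_two 2, pow_mul, hω, add_pow_char, hω, one_pow]
    grind
  have := hper.iterate_mod_apply k
  simp only [pow_iterate, Nat.odd_iff.1 hk, pow_one, hω] at this
  exact this.symm

end CharTwo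

section GaloisField

variable {m : ℕ}

theorem pow_two_pow_self (hm : m ≠ 0) (x : GaloisField 2 m) : x ^ 2 ^ m = x := by
  have := Fintype.ofFinite (GaloisField 2 m)
  rw [← GaloisField.card 2 m hm, Nat.card_eq_fintype_card, FiniteField.pow_card]

theorem pow_two_pow_mul_self (hm : m ≠ 0) (x : GaloisField 2 m) (k : ℕ) : x ^ 2 ^ (m * k) = x :=
  pow_pow_eq_self_iff_isPeriodicPt.2 <|
    (pow_pow_eq_self_iff_isPeriodicPt.1 (pow_two_pow_self hm x)).mul_const k

theorem pow_two_pow_gcd_self (hm : m ≠ 0) {x : GaloisField 2 m} {k : ℕ} (hx : x ^ 2 ^ k = x) :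
    x ^ 2 ^ k.gcd m = x :=
  pow_pow_eq_self_iff_isPeriodicPt.2 <|
    (pow_pow_eq_self_iff_isPeriodicPt.1 hx).gcd
      (pow_pow_eq_self_iff_isPeriodicPt.1 (pow_two_pow_self hm x))

theorem eq_zero_or_one_of_pow_two_pow_self (hm : m ≠ 0) {k : ℕ} (hk : k.Coprime m)
    {x : GaloisField 2 m} (hx : x ^ 2 ^ k = x) : x = 0 ∨ x = 1 := by
  have h := pow_two_pow_gcd_self hm hx
  rw [hk.gcd_eq_one, pow_one] at h
  grind

theorem exists_pow_two_pow_ne_self {k : ℕ} (hk : 0 < k) (hkm : k < m) :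
    ∃ u : GaloisField 2 m, u ^ 2 ^ k ≠ u := by
  by_contra! h
  have hfrob : FiniteField.frobeniusAlgHom (ZMod 2) (GaloisField 2 m) ^ k = 1 := by
    ext u
    rw [AlgHom.coe_pow, FiniteField.coe_frobeniusAlgHom, pow_iterate, ZMod.card, AlgHom.one_apply]
    exact h u
  have := Nat.le_of_dvd hk (orderOf_dvd_of_pow_eq_one hfrob)
  rw [FiniteField.orderOf_frobeniusAlgHom, GaloisField.finrank 2 (by omega)] at this
  omega

theorem exists_sq_eq_add_one (hm : m ≠ 0) (hme : Even m) :
    ∃ ω : GaloisField 2 m, ω ^ 2 = ω + 1 := by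
  have h3 : 3 ∣ Nat.card (GaloisField 2 m)ˣ := by
    rw [Nat.card_units, GaloisField.card 2 m hm]
    exact Nat.pow_sub_one_dvd_pow_sub_one 2 hme.two_dvd
  have : Fact (Nat.Prime 3) := ⟨Nat.prime_three⟩
  obtain ⟨g, hg⟩ := exists_prime_orderOf_dvd_card' 3 h3
  have hg3 : (g : GaloisField 2 m) ^ 3 = 1 := by
    rw [← Units.val_pow_eq_pow_val, ← hg, pow_orderOf_eq_one, Units.val_one]
  have hg1 : (g : GaloisField 2 m) ≠ 1 := by
    intro h
    rw [Units.val_eq_one.1 h, orderOf_one] at hg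
    omega
  exact ⟨g, by grind⟩

end GaloisField

section Trace

variable {m : ℕ}

theorem tr_add (x y : GaloisField 2 m) : tr m (x + y) = tr m x + tr m y := map_add _ x y

theorem tr_algebraMap_mul (c : ZMod 2) (x : GaloisField 2 m) :
    tr m (algebraMap (ZMod 2) (GaloisField 2 m) c * x) = c * tr m x := by
  rw [tr, ← Algebra.smul_def, map_smul, smul_eq_mul, tr]

theorem tr_pow_two (x : GaloisField 2 m) : tr m (x ^ 2) = tr m x :=
  Algebra.trace_eq_of_algEquiv (FiniteField.frobeniusAlgEquivOfAlgebraic (ZMod 2) _) x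

theorem tr_pow_two_pow (x : GaloisField 2 m) (k : ℕ) : tr m (x ^ 2 ^ k) = tr m x := by
  induction k with
  | zero => rw [pow_zero, pow_one]
  | succ k ih => rw [pow_succ, pow_mul, tr_pow_two, ih]

theorem tr_one (hm : m ≠ 0) (hme : Even m) : tr m 1 = 0 := by
  rw [tr, ← map_one (algebraMap (ZMod 2) _), Algebra.trace_algebraMap, GaloisField.finrank 2 hm,
    nsmul_eq_mul, mul_one, ZMod.natCast_eq_zero_iff]
  exact hme.two_dvd

theorem exists_tr_mul_eq_one {c : GaloisField 2 m} (hc : c ≠ 0) : ∃ v, tr m (c * v) = 1 := by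
  obtain ⟨z, hz⟩ := Algebra.trace_surjective (ZMod 2) (GaloisField 2 m) 1
  exact ⟨c⁻¹ * z, by rwa [mul_inv_cancel_left₀ hc]⟩

theorem algebraMap_zmod_two_eq_zero_or_one (c : ZMod 2) :
    algebraMap (ZMod 2) (GaloisField 2 m) c = 0 ∨
      algebraMap (ZMod 2) (GaloisField 2 m) c = 1 := by
  rcases (by decide : ∀ c : ZMod 2, c = 0 ∨ c = 1) c with rfl | rfl <;> simp

end Trace

section Fapn

variable {m i : ℕ}

/-- The involution `F₁` of the paper, with `a = 1`. -/
noncomputable def traceShift (m i : ℕ) (x : GaloisField 2 m) : GaloisField 2 m :=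
  x + algebraMap (ZMod 2) (GaloisField 2 m) (tr m (x ^ (2 ^ i + 1)))

theorem tr_add_pow_two_pow_add_one (x y : GaloisField 2 m) :
    tr m ((x + y) ^ (2 ^ i + 1)) =
      tr m (x ^ (2 ^ i + 1)) + tr m (y ^ (2 ^ i + 1)) + tr m (y * x ^ 2 ^ i + y ^ 2 ^ i * x) := by
  rw [add_pow_two_pow_add_one, tr_add, tr_add, tr_add]
  ring

theorem tr_add_one_pow_two_pow_add_one (hm : m ≠ 0) (hme : Even m) (x : GaloisField 2 m) :
    tr m ((x + 1) ^ (2 ^ i + 1)) = tr m (x ^ (2 ^ i + 1)) := by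
  rw [tr_add_pow_two_pow_add_one, one_pow, one_pow, one_mul, one_mul, tr_add, tr_pow_two_pow,
    tr_one hm hme]
  grind

theorem Fapn_eq_traceShift_pow (x : GaloisField 2 m) :
    Fapn m i x = traceShift m i x ^ (2 ^ i + 1) := by
  rw [Fapn, traceShift]
  rcases algebraMap_zmod_two_eq_zero_or_one (tr m (x ^ (2 ^ i + 1))) with h | h <;> rw [h]
  · ring
  · rw [add_pow_two_pow_add_one, one_pow, one_pow]
    ring

theorem tr_Fapn (hm : m ≠ 0) (hme : Even m) (x : GaloisField 2 m) :
    tr m (Fapn m i x) = tr m (x ^ (2 ^ i + 1)) := by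
  rw [Fapn, tr_add, mul_comm, tr_algebraMap_mul, tr_add, tr_add, tr_pow_two_pow, tr_one hm hme]
  grind

theorem traceShift_involutive (hm : m ≠ 0) (hme : Even m) : Involutive (traceShift m i) := by
  intro x
  have htr : tr m (traceShift m i x ^ (2 ^ i + 1)) = tr m (x ^ (2 ^ i + 1)) := by
    rw [← Fapn_eq_traceShift_pow, tr_Fapn hm hme]
  rw [traceShift, htr, traceShift]
  grind

theorem traceShift_add_of_Fapn (hm : m ≠ 0) (hme : Even m) {a b x : GaloisField 2 m}
    (hx : Fapn m i (x + a) + Fapn m i x = b) :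
    traceShift m i (x + a) = traceShift m i x + (a + algebraMap (ZMod 2) _ (tr m b)) := by
  rw [← hx, tr_add, tr_Fapn hm hme, tr_Fapn hm hme, map_add, traceShift, traceShift]
  grind

end Fapn

section APN

variable {m i : ℕ}

theorem card_pow_two_pow_add_one_diff_le_two (hm : m ≠ 0) (hi : i.Coprime m)
    {a : GaloisField 2 m} (ha : a ≠ 0) (b : GaloisField 2 m) :
    Nat.card {x // (x + a) ^ (2 ^ i + 1) + x ^ (2 ^ i + 1) = b} ≤ 2 := by
  refine card_subtype_le_two (· + a) fun x y hx hy => ?_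
  obtain ⟨w, rfl⟩ : ∃ w, y = x + a * w := ⟨(y - x) / a, by field_simp; ring⟩
  have hw : a ^ (2 ^ i + 1) * (w ^ 2 ^ i + w) = 0 := by
    rw [add_pow_two_pow_add_one] at hx hy
    rw [add_pow_two_pow_add_one, add_pow_char_pow, mul_pow] at hy
    grind
  have hfix : w ^ 2 ^ i = w := by
    have := (mul_eq_zero.1 hw).resolve_left (pow_ne_zero _ ha)
    grind
  rcases eq_zero_or_one_of_pow_two_pow_self hm hi hfix with rfl | rfl
  · left; ring
  · right; ring

theorem Fapn_card_diff_le_two (hm : m ≠ 0) (hme : Even m) (hi : i.Coprime m)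
    {a : GaloisField 2 m} (ha : a ≠ 0) (b : GaloisField 2 m) :
    Nat.card {x // Fapn m i (x + a) + Fapn m i x = b} ≤ 2 := by
  have hinj := (traceShift_involutive (i := i) hm hme).injective
  set a' := a + algebraMap (ZMod 2) _ (tr m b)
  have hshift : ∀ {x}, Fapn m i (x + a) + Fapn m i x = b →
      traceShift m i (x + a) = traceShift m i x + a' := traceShift_add_of_Fapn hm hme
  rcases eq_or_ne a' 0 with ha' | ha'
  · have : IsEmpty {x // Fapn m i (x + a) + Fapn m i x = b} :=
      ⟨fun ⟨x, hx⟩ => ha (add_eq_left.1 (hinj ((hshift hx).trans (by rw [ha', add_zero]))))⟩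
    simp
  refine le_trans ?_ (card_pow_two_pow_add_one_diff_le_two hm hi ha' b)
  refine Nat.card_le_card_of_injective (fun x => ⟨traceShift m i x, ?_⟩) fun x y hxy =>
    Subtype.ext (hinj (congrArg Subtype.val hxy))
  rw [← hshift x.2, ← Fapn_eq_traceShift_pow, ← Fapn_eq_traceShift_pow]
  exact x.2

end APN

section NotEAEquivalent

variable {m i : ℕ}

theorem dirDeriv_one_Fapn (hm : m ≠ 0) (hme : Even m) (x : GaloisField 2 m) :
    dirDeriv 1 (Fapn m i) x = x ^ 2 ^ i + x + 1 := by
  rw [dirDeriv, Fapn, Fapn, tr_add_one_pow_two_pow_add_one hm hme, add_pow_two_pow_add_one,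
    add_pow_char_pow, one_pow, one_pow, one_mul, one_mul]
  grind

theorem isAffine_dirDeriv_one_Fapn (hm : m ≠ 0) (hme : Even m) :
    IsAffine (dirDeriv 1 (Fapn m i)) := by
  rw [funext (dirDeriv_one_Fapn hm hme)]
  intro x y
  beta_reduce
  rw [add_pow_char_pow, zero_pow (pow_ne_zero i two_ne_zero)]
  grind

theorem tr_add_pow_two_pow_add_one_of_sq_eq_add_one (hm : m ≠ 0) (hme : Even m) (hi : Odd i)
    {ω : GaloisField 2 m} (hω : ω ^ 2 = ω + 1) (x : GaloisField 2 m) :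
    tr m ((x + ω) ^ (2 ^ i + 1)) = tr m (x ^ (2 ^ i + 1)) := by
  have hωi := pow_two_pow_of_sq_eq_add_one hω hi
  have hcross : ω * x ^ 2 ^ i = ((ω + 1) * x) ^ 2 ^ i := by
    rw [mul_pow, add_pow_char_pow, hωi, one_pow]
    grind
  have hgold : ω ^ (2 ^ i + 1) = 1 := by
    rw [pow_succ, hωi]
    grind
  rw [tr_add_pow_two_pow_add_one, hgold, tr_one hm hme, tr_add, hcross, tr_pow_two_pow, hωi]
  grind

theorem dirDeriv_Fapn_of_sq_eq_add_one (hm : m ≠ 0) (hme : Even m) (hi : Odd i)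
    {ω : GaloisField 2 m} (hω : ω ^ 2 = ω + 1) (x : GaloisField 2 m) :
    dirDeriv ω (Fapn m i) x =
      algebraMap (ZMod 2) _ (tr m (x ^ (2 ^ i + 1))) + dirDeriv ω (· ^ (2 ^ i + 1)) x := by
  rw [dirDeriv, dirDeriv, Fapn, Fapn, tr_add_pow_two_pow_add_one_of_sq_eq_add_one hm hme hi hω,
    add_pow_char_pow, pow_two_pow_of_sq_eq_add_one hω hi]
  grind

theorem exists_tr_mul_pow_two_pow_add_eq_one (hm : 4 ≤ m) (hme : Even m) (hi : i.Coprime m) :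
    ∃ u v : GaloisField 2 m, tr m (v * u ^ 2 ^ i + v ^ 2 ^ i * u) = 1 := by
  have hm0 : m ≠ 0 := by omega
  have hmi : (m - 1) * i + i = m * i := by
    rw [← Nat.succ_mul, Nat.succ_eq_add_one, Nat.sub_add_cancel (by omega)]
  obtain ⟨u, hu⟩ := exists_pow_two_pow_ne_self (m := m) (k := 2) (by norm_num) (by omega)
  have hc : u ^ 2 ^ i + u ^ 2 ^ ((m - 1) * i) ≠ 0 := by
    intro h
    have h2i : u ^ 2 ^ (2 * i) = u := by
      calc u ^ 2 ^ (2 * i) = (u ^ 2 ^ i) ^ 2 ^ i := by rw [two_mul, pow_add, pow_mul]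
        _ = (u ^ 2 ^ ((m - 1) * i)) ^ 2 ^ i := by rw [CharTwo.add_eq_zero.1 h]
        _ = u := by rw [← pow_mul, ← pow_add, hmi, pow_two_pow_mul_self hm0]
    have := pow_two_pow_gcd_self hm0 h2i
    rw [Nat.Coprime.gcd_mul_right_cancel 2 hi, Nat.gcd_eq_left hme.two_dvd] at this
    exact hu this
  obtain ⟨v, hv⟩ := exists_tr_mul_eq_one hc
  -- `x ↦ x ^ 2 ^ ((m - 1) * i)` is the adjoint of `x ↦ x ^ 2 ^ i` for the trace form
  have hadj : tr m (v ^ 2 ^ i * u) = tr m (u ^ 2 ^ ((m - 1) * i) * v) := by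
    rw [← tr_pow_two_pow (u ^ 2 ^ ((m - 1) * i) * v) i, mul_pow, ← pow_mul, ← pow_add, hmi,
      pow_two_pow_mul_self hm0, mul_comm]
  refine ⟨u, v, ?_⟩
  rw [tr_add, hadj, ← hv, add_mul, tr_add, mul_comm v]

theorem not_isAffine_tr_pow_two_pow_add_one (hm : 4 ≤ m) (hme : Even m) (hi : i.Coprime m) :
    ¬ IsAffine fun x : GaloisField 2 m => tr m (x ^ (2 ^ i + 1)) := by
  intro h
  obtain ⟨u, v, huv⟩ := exists_tr_mul_pow_two_pow_add_eq_one hm hme hi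
  have h0 : tr m (0 : GaloisField 2 m) = 0 := map_zero _
  have := h u v
  beta_reduce at this
  rw [tr_add_pow_two_pow_add_one, huv, zero_pow (Nat.succ_ne_zero _), h0] at this
  grind

theorem not_isAffine_dirDeriv_Fapn (hm : 4 ≤ m) (hme : Even m) (hi : i.Coprime m)
    {ω : GaloisField 2 m} (hω : ω ^ 2 = ω + 1) : ¬ IsAffine (dirDeriv ω (Fapn m i)) := by
  have hodd : Odd i := Nat.coprime_two_right.1 (hi.coprime_dvd_right hme.two_dvd)
  rw [funext (dirDeriv_Fapn_of_sq_eq_add_one (by omega) hme hodd hω),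
    isAffine_add_iff_left (isAffine_dirDeriv_pow_two_pow_add_one i ω)]
  exact fun h => not_isAffine_tr_pow_two_pow_add_one hm hme hi <|
    (isAffine_comp_iff_of_injective (algebraMap (ZMod 2) (GaloisField 2 m)).toAddMonoidHom
      (algebraMap (ZMod 2) (GaloisField 2 m)).injective).1 h

theorem Fapn_not_eaEquivalent_pow (hm : 4 ≤ m) (hme : Even m) (hi : i.Coprime m) :
    ¬ ∃ (d : ℕ) (A₁ A₂ : GaloisField 2 m ≃ₗ[ZMod 2] GaloisField 2 m)
        (A : GaloisField 2 m →ₗ[ZMod 2] GaloisField 2 m) (c₁ c₂ c₀ : GaloisField 2 m),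
        ∀ x, Fapn m i x = A₁ ((A₂ x + c₂) ^ d) + c₁ + A x + c₀ := by
  rintro ⟨d, A₁, A₂, A, c₁, c₂, c₀, hF⟩
  obtain ⟨ω, hω⟩ := exists_sq_eq_add_one (by omega) hme
  have hEA := isAffine_dirDeriv_iff_of_eq_affine_comp A₁.toAddEquiv A₂.toAddEquiv
    A.toAddMonoidHom c₁ c₂ c₀ (g := (· ^ d)) hF
  have hpow : IsAffine (dirDeriv (A₂ 1) (· ^ d)) :=
    (hEA 1).1 (isAffine_dirDeriv_one_Fapn (by omega) hme)
  exact not_isAffine_dirDeriv_Fapn hm hme hi hω <|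
    (hEA ω).2 (hpow.dirDeriv_pow (by simp) _)

end NotEAEquivalent

/-- For `m ≥ 4` even and `gcd(i,m) = 1`, the function
`F'(x) = x^{2^i+1} + (x^{2^i}+x+1)·tr(x^{2^i+1})` is APN (every equation
`F'(x+a) + F'(x) = b` with `a ≠ 0` has at most two solutions) and is
EA-inequivalent to every power function. -/
theorem stmt_17 (m i : ℕ) (hm : 4 ≤ m) (hme : Even m) (hi : Nat.gcd i m = 1) :
    (∀ a b : GaloisField 2 m, a ≠ 0 →
      Nat.card {x : GaloisField 2 m // Fapn m i (x + a) + Fapn m i x = b} ≤ 2) ∧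
    ¬ ∃ (d : ℕ) (A₁ A₂ : GaloisField 2 m ≃ₗ[ZMod 2] GaloisField 2 m)
        (A : GaloisField 2 m →ₗ[ZMod 2] GaloisField 2 m)
        (c₁ c₂ c₀ : GaloisField 2 m),
        ∀ x, Fapn m i x = A₁ ((A₂ x + c₂) ^ d) + c₁ + A x + c₀ :=
  ⟨fun _ b ha => Fapn_card_diff_le_two (by omega) hme hi ha b,
    Fapn_not_eaEquivalent_pow hm hme hi⟩
end

section
/- Let m be odd, n a divisor of m with n ≠ m, gcd(m,i)=1, and let Tr = tr_{m/n} be the relative trace from F_{2^m} to F_{2^n}. Then the map F_1(x) = x + Tr(x) + Tr(x^{2^i+1}) is a permutation of F_{2^m}, with inverse F_1^{-1}(y) = y + [Tr(y)^{2^i+1} + Tr(y^{2^i+1}) + Tr(y)]^{1/(2^i+1)} + Tr(y), where z ↦ z^{1/(2^i+1)} is the inverse of z ↦ z^{2^i+1} on F_{2^n} (well-defined since gcd(2^i+1, 2^n−1)=1 for n odd, gcd(i,n)=1). -/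
/-- The relative trace `tr_{m/n} : 𝔽_{2^m} → 𝔽_{2^n}`,
`x ↦ Σ_{k=0}^{m/n-1} x^{2^{kn}}`. -/
noncomputable def relTr (m n : ℕ) (x : GaloisField 2 m) : GaloisField 2 m :=
  ∑ k ∈ Finset.range (m / n), x ^ (2 ^ (k * n))

/-- `F₁(x) = x + tr_{m/n}(x) + tr_{m/n}(x^{2^i+1})`. -/
noncomputable def F₁ (m n i : ℕ) (x : GaloisField 2 m) : GaloisField 2 m :=
  x + relTr m n x + relTr m n (x ^ (2 ^ i + 1))

/-- The claimed inverse
`y ↦ y + [Tr(y)^{2^i+1} + Tr(y^{2^i+1}) + Tr(y)]^d + Tr(y)`,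
where `z ↦ z^d` inverts `z ↦ z^{2^i+1}` on `𝔽_{2^n}`. -/
noncomputable def F₁inv (m n i d : ℕ) (y : GaloisField 2 m) : GaloisField 2 m :=
  y + ((relTr m n y) ^ (2 ^ i + 1) + relTr m n (y ^ (2 ^ i + 1)) +
        relTr m n y) ^ d + relTr m n y

section Aux

variable {m n : ℕ}

lemma sum_pow_two_pow {s : Finset ℕ} (f : ℕ → GaloisField 2 m) (j : ℕ) :
    (∑ k ∈ s, f k) ^ (2 ^ j) = ∑ k ∈ s, f k ^ (2 ^ j) := by
  have h := map_sum (iterateFrobenius (GaloisField 2 m) 2 j) f s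
  simpa only [iterateFrobenius_def] using h

lemma relTr_add (x y : GaloisField 2 m) :
    relTr m n (x + y) = relTr m n x + relTr m n y := by
  unfold relTr
  rw [← Finset.sum_add_distrib]
  exact Finset.sum_congr rfl fun k _ => add_pow_char_pow ..

lemma relTr_pow (j : ℕ) (x : GaloisField 2 m) :
    relTr m n (x ^ (2 ^ j)) = (relTr m n x) ^ (2 ^ j) := by
  unfold relTr
  rw [sum_pow_two_pow]
  exact Finset.sum_congr rfl fun k _ => by
    rw [← pow_mul, ← pow_mul, mul_comm]

lemma galois_pow_card (hm : m ≠ 0) (x : GaloisField 2 m) : x ^ (2 ^ m) = x := by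
  haveI : Fintype (GaloisField 2 m) := Fintype.ofFinite _
  have hcard : Fintype.card (GaloisField 2 m) = 2 ^ m := by
    rw [← Nat.card_eq_fintype_card, GaloisField.card 2 m hm]
  have := FiniteField.pow_card x
  rwa [hcard] at this

/-- Iterated fixedness. -/
lemma fix_pow_mul {u : GaloisField 2 m} (hu : u ^ (2 ^ n) = u) (k : ℕ) :
    u ^ (2 ^ (k * n)) = u := by
  induction k with
  | zero => simp
  | succ k ih =>
    have h1 : (k + 1) * n = k * n + n := by ring
    calc u ^ 2 ^ ((k + 1) * n) = (u ^ 2 ^ (k * n)) ^ 2 ^ n := by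
          rw [h1, pow_add, pow_mul]
      _ = u := by rw [ih, hu]

lemma relTr_fixed (hm : m ≠ 0) (hn : n ∣ m) (x : GaloisField 2 m) :
    (relTr m n x) ^ (2 ^ n) = relTr m n x := by
  unfold relTr
  rw [sum_pow_two_pow]
  have key : ∀ k, (x ^ 2 ^ (k * n)) ^ 2 ^ n = x ^ 2 ^ ((k + 1) * n) := fun k => by
    rw [← pow_mul, ← pow_add, add_mul, one_mul]
  simp_rw [key]
  have hfr : x ^ 2 ^ (m / n * n) = x ^ 2 ^ (0 * n) := by
    rw [Nat.div_mul_cancel hn, galois_pow_card hm, zero_mul, pow_zero, pow_one]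
  calc ∑ k ∈ Finset.range (m / n), x ^ 2 ^ ((k + 1) * n)
      = ∑ k ∈ Finset.range (m / n + 1), x ^ 2 ^ (k * n) - x ^ 2 ^ (0 * n) := by
        rw [Finset.sum_range_succ']; ring
    _ = ∑ k ∈ Finset.range (m / n), x ^ 2 ^ (k * n) := by
        rw [Finset.sum_range_succ, hfr]; ring

/-- trace of a fixed element is itself (since `m / n` is odd). -/
lemma relTr_of_fixed (hodd : Odd (m / n)) {u : GaloisField 2 m}
    (hu : u ^ (2 ^ n) = u) : relTr m n u = u := by
  unfold relTr
  have h : ∀ k ∈ Finset.range (m / n), u ^ (2 ^ (k * n)) = u :=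
    fun k _ => fix_pow_mul hu k
  rw [Finset.sum_congr rfl h, Finset.sum_const, Finset.card_range]
  obtain ⟨s, hs⟩ := hodd
  have h2 : (2 : GaloisField 2 m) = 0 := by
    have := CharP.cast_eq_zero (GaloisField 2 m) 2
    simpa using this
  rw [hs]
  push_cast [nsmul_eq_mul]
  rw [h2]; ring

lemma relTr_smul {u : GaloisField 2 m} (hu : u ^ (2 ^ n) = u)
    (x : GaloisField 2 m) : relTr m n (u * x) = u * relTr m n x := by
  unfold relTr
  rw [Finset.mul_sum]
  refine Finset.sum_congr rfl fun k _ => ?_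
  rw [mul_pow, fix_pow_mul hu k]

end Aux

/-- For `m` odd, `n ∣ m`, `n ≠ m`, `gcd(m,i) = 1`, the map `F₁` is a
permutation of `𝔽_{2^m}` whose inverse is `F₁inv` (the power `z ↦ z^d` being
the inverse of `z ↦ z^{2^i+1}` on the subfield `𝔽_{2^n}`). -/
theorem stmt_19 (m n i : ℕ) (hmodd : Odd m) (hn : n ∣ m) (hnm : n ≠ m)
    (hi : Nat.gcd m i = 1) (d : ℕ)
    (hd : ∀ z : GaloisField 2 m, z ^ (2 ^ n) = z → (z ^ (2 ^ i + 1)) ^ d = z) :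
    Function.Bijective (F₁ m n i) ∧
    Function.LeftInverse (F₁inv m n i d) (F₁ m n i) ∧
    Function.RightInverse (F₁inv m n i d) (F₁ m n i) := by
  have hm0 : m ≠ 0 := by rintro rfl; simp [Nat.odd_iff] at hmodd
  have hrodd : Odd (m / n) := by
    have h := (Nat.mul_div_cancel' hn).symm
    rw [h, Nat.odd_mul] at hmodd
    exact hmodd.2
  have h2 : (2 : GaloisField 2 m) = 0 := by
    have := CharP.cast_eq_zero (GaloisField 2 m) 2
    simpa using this
  have hleft : Function.LeftInverse (F₁inv m n i d) (F₁ m n i) := by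
    intro x
    set a := relTr m n x with ha
    set b := relTr m n (x ^ (2 ^ i + 1)) with hb
    have hafix : a ^ (2 ^ n) = a := relTr_fixed hm0 hn x
    have hbfix : b ^ (2 ^ n) = b := relTr_fixed hm0 hn _
    set u := a + b with hu
    have hufix : u ^ (2 ^ n) = u := by
      rw [hu, add_pow_char_pow, hafix, hbfix]
    have huqfix : (u ^ (2 ^ i)) ^ (2 ^ n) = u ^ (2 ^ i) := by
      rw [← pow_mul, mul_comm, pow_mul, hufix]
    have hy : F₁ m n i x = x + u := by
      rw [F₁, hu]; ring
    have hTy : relTr m n (F₁ m n i x) = b := by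
      rw [hy, relTr_add, relTr_of_fixed hrodd hufix, ← ha, hu]
      linear_combination a * h2
    have hypow : (F₁ m n i x) ^ (2 ^ i + 1) =
        x ^ (2 ^ i + 1) + u * x ^ (2 ^ i) + u ^ (2 ^ i) * x + u ^ (2 ^ i) * u := by
      rw [hy, pow_succ, add_pow_char_pow]
      ring
    have hTypow : relTr m n ((F₁ m n i x) ^ (2 ^ i + 1)) =
        b + u * a ^ (2 ^ i) + u ^ (2 ^ i) * a + u ^ (2 ^ i) * u := by
      rw [hypow, relTr_add, relTr_add, relTr_add,
        relTr_smul hufix, relTr_smul huqfix, relTr_smul huqfix,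
        relTr_of_fixed hrodd hufix, relTr_pow, ← ha, ← hb]
    have hS : b ^ (2 ^ i + 1) + relTr m n ((F₁ m n i x) ^ (2 ^ i + 1)) + b
        = a ^ (2 ^ i + 1) := by
      rw [hTypow, hu, add_pow_char_pow, pow_succ, pow_succ]
      linear_combination
        (b ^ 2 ^ i * b + b + a ^ 2 ^ i * a + a ^ 2 ^ i * b + b ^ 2 ^ i * a) * h2
    have hSd : (b ^ (2 ^ i + 1) + relTr m n ((F₁ m n i x) ^ (2 ^ i + 1)) + b) ^ d = a := by
      rw [hS]; exact hd a hafix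
    show F₁ m n i x + _ + _ = x
    rw [hTy, hSd, hy, hu]
    linear_combination (a + b) * h2
  have hinj : Function.Injective (F₁ m n i) := hleft.injective
  have hbij : Function.Bijective (F₁ m n i) := Finite.injective_iff_bijective.mp hinj
  exact ⟨hbij, hleft, hleft.rightInverse_of_surjective hbij.2⟩
end
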